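/- arXiv:1806.09147 — 12 statements merged into one kernel-verified Lean document; each statement's English description precedes it below -/
import Mathlib

section
/- Let P be a cycle of period q>1 of a continuous interval map f, and let m be the number of points x in P such that (f(x)−x) and (f²(x)−f(x)) have different signs. Then m is even, positive, and does not exceed q. -/
open scoped Classical

/-- Let `f` be a continuous map of the interval `[c,d]` into itself, and let `x0` be a
periodic point of minimal period `q > 1`, with orbit `P`. Let `m` be the number of points
`y ∈ P` such that `f y - y` and `f (f y) - f (f y)` have different signs (i.e. their
product is negative). Then `m` is even, positive, and does not exceed `q`. -/
theorem stmt1 (c d : ℝ) (hcd : c ≤ d) (f : ℝ → ℝ)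
    (hf : ContinuousOn f (Set.Icc c d)) (hmaps : Set.MapsTo f (Set.Icc c d) (Set.Icc c d))
    (q : ℕ) (hq : 1 < q) (x0 : ℝ) (hx0 : x0 ∈ Set.Icc c d)
    (hper : f^[q] x0 = x0) (hmin : ∀ t, 0 < t → t < q → f^[t] x0 ≠ x0)
    (P : Finset ℝ) (hP : P = (Finset.range q).image (fun t => f^[t] x0))
    (m : ℕ) (hm : m = (P.filter (fun y => (f y - y) * (f (f y) - f y) < 0)).card) :
    Even m ∧ 0 < m ∧ m ≤ q := by
  have hq0 : 0 < q := by omega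
  set s : ℕ → ℝ := fun t => f^[t] x0 with hs
  have hmod : ∀ t, s t = s (t % q) := by
    intro t
    show f^[t] x0 = f^[t % q] x0
    conv_lhs => rw [← Nat.mod_add_div t q]
    rw [Function.iterate_add_apply, Function.iterate_mul, Function.iterate_fixed hper]
  have hstep : ∀ t, f (s t) = s (t + 1) := fun t =>
    (Function.iterate_succ_apply' f t x0).symm
  have hmemP : ∀ y, y ∈ P ↔ ∃ t, t < q ∧ s t = y := by
    intro y; subst hP; simp [Finset.mem_image, hs]
  have hsq : s q = s 0 := by
    show f^[q] x0 = f^[0] x0; simp [hper]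
  have hsq1 : s (q + 1) = s 1 := by
    rw [hmod (q + 1), Nat.add_mod_left, Nat.mod_eq_of_lt hq]
  have noFix : ∀ t, s (t + 1) ≠ s t := by
    intro t h
    have hfix : f (s t) = s t := by rw [hstep]; exact h
    have h1 : s (t % q) = s t := (hmod t).symm
    have hfix' : f (s (t % q)) = s (t % q) := by rw [h1, hfix]
    have hit : f^[q - t % q] (s (t % q)) = s (t % q) := Function.iterate_fixed hfix' _
    have h2 : f^[q - t % q] (s (t % q)) = s (q - t % q + t % q) := by
      show f^[q - t % q] (f^[t % q] x0) = f^[q - t % q + t % q] x0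
      rw [Function.iterate_add_apply]
    have h3 : q - t % q + t % q = q := by
      have := Nat.mod_lt t hq0; omega
    rw [h2, h3, hsq] at hit
    have hx0eq : x0 = s (t % q) := hit
    have hfx0 : f x0 = x0 := by rw [hx0eq, hfix', ← hx0eq]
    exact hmin 1 one_pos hq (by simpa using hfx0)
  have hne1 : ∀ t, s t ≠ s (t + 1) := fun t h => noFix t h.symm
  have hinj2 : ∀ a b, a < b → b < q → s a ≠ s b := by
    intro a b hab hbq h
    have h1 : f^[q - b] (s b) = x0 := by
      show f^[q - b] (f^[b] x0) = x0
      rw [← Function.iterate_add_apply]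
      have he : q - b + b = q := by omega
      rw [he, hper]
    have h2 : f^[q - b] (s a) = s (q - b + a) := by
      show f^[q - b] (f^[a] x0) = f^[q - b + a] x0
      rw [Function.iterate_add_apply]
    rw [h, h1] at h2
    exact hmin (q - b + a) (by omega) (by omega) h2.symm
  have hinjOn : Set.InjOn s (Finset.range q : Set ℕ) := by
    intro a ha b hb h
    simp only [Finset.coe_range, Set.mem_Iio] at ha hb
    rcases lt_trichotomy a b with h' | h' | h'
    · exact absurd h (hinj2 a b h' hb)
    · exact h'
    · exact absurd h.symm (hinj2 b a h' ha)
  -- rewrite m as a count over range q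
  have hm' : m = ((Finset.range q).filter
      (fun t => (s (t+1) - s t) * (s (t+2) - s (t+1)) < 0)).card := by
    rw [hm, hP]
    rw [Finset.filter_image]
    rw [Finset.card_image_of_injOn (hinjOn.mono (by
      intro x hx
      simp only [Finset.coe_filter, Set.mem_setOf_eq] at hx
      simpa using hx.1))]
    congr 1
    apply Finset.filter_congr
    intro t ht
    show (f (s t) - s t) * (f (f (s t)) - f (s t)) < 0 ↔ _
    rw [hstep t, hstep (t+1)]
  -- characterize the predicate
  have hiff : ∀ t, ((s (t+1) - s t) * (s (t+2) - s (t+1)) < 0) ↔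
      ¬ ((s t < s (t+1)) ↔ (s (t+1) < s (t+2))) := by
    intro t
    have h1 : s t ≠ s (t+1) := hne1 t
    have h2 : s (t+1) ≠ s (t+2) := hne1 (t+1)
    rcases lt_or_gt_of_ne h1 with ha | ha <;> rcases lt_or_gt_of_ne h2 with hb | hb
    · have hpr : ¬ ((s (t+1) - s t) * (s (t+2) - s (t+1)) < 0) :=
        not_lt.2 (mul_pos (sub_pos.2 ha) (sub_pos.2 hb)).le
      simp [hpr, ha, hb]
    · have hpr : (s (t+1) - s t) * (s (t+2) - s (t+1)) < 0 :=
        mul_neg_of_pos_of_neg (sub_pos.2 ha) (sub_neg.2 hb)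
      simp [hpr, ha, not_lt.2 hb.le]
    · have hpr : (s (t+1) - s t) * (s (t+2) - s (t+1)) < 0 :=
        mul_neg_of_neg_of_pos (sub_neg.2 ha) (sub_pos.2 hb)
      simp [hpr, hb, not_lt.2 ha.le]
    · have hpr : ¬ ((s (t+1) - s t) * (s (t+2) - s (t+1)) < 0) :=
        not_lt.2 (mul_pos_of_neg_of_neg (sub_neg.2 ha) (sub_neg.2 hb)).le
      simp [hpr, not_lt.2 ha.le, not_lt.2 hb.le]
  -- m ≤ q
  have hmq : m ≤ q := by
    rw [hm']
    calc _ ≤ (Finset.range q).card := Finset.card_filter_le _ _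
    _ = q := Finset.card_range q
  -- parity
  set b : ℕ → ZMod 2 := fun t => if s t < s (t + 1) then 1 else 0 with hb
  have hkey : ∀ t, ((if (s (t+1) - s t) * (s (t+2) - s (t+1)) < 0 then 1 else 0 : ZMod 2))
      = b (t+1) - b t := by
    intro t
    have h1 : s t ≠ s (t+1) := hne1 t
    have h2 : s (t+1) ≠ s (t+2) := hne1 (t+1)
    simp only [hb]
    rcases lt_or_gt_of_ne h1 with ha | ha <;> rcases lt_or_gt_of_ne h2 with hc | hc
    · have hpr : ¬ ((s (t+1) - s t) * (s (t+2) - s (t+1)) < 0) :=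
        not_lt.2 (mul_pos (sub_pos.2 ha) (sub_pos.2 hc)).le
      simp [hpr, ha, hc]
    · have hpr : (s (t+1) - s t) * (s (t+2) - s (t+1)) < 0 :=
        mul_neg_of_pos_of_neg (sub_pos.2 ha) (sub_neg.2 hc)
      simp [hpr, ha, not_lt.2 hc.le]
    · have hpr : (s (t+1) - s t) * (s (t+2) - s (t+1)) < 0 :=
        mul_neg_of_neg_of_pos (sub_neg.2 ha) (sub_pos.2 hc)
      simp [hpr, hc, not_lt.2 ha.le]
    · have hpr : ¬ ((s (t+1) - s t) * (s (t+2) - s (t+1)) < 0) :=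
        not_lt.2 (mul_pos_of_neg_of_neg (sub_neg.2 ha) (sub_neg.2 hc)).le
      simp [hpr, not_lt.2 ha.le, not_lt.2 hc.le]
  have hbq : b q = b 0 := by
    simp only [hb]
    rw [hsq, hsq1]
  have heven : Even m := by
    have hcast : (m : ZMod 2) = 0 := by
      rw [hm', Finset.card_filter]
      push_cast
      rw [Finset.sum_congr rfl (fun t _ => hkey t)]
      rw [Finset.sum_range_sub b q, hbq, sub_self]
    exact even_iff_two_dvd.mpr ((ZMod.natCast_eq_zero_iff m 2).1 hcast)
  -- positivity
  have hpos : 0 < m := by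
    by_contra hmc
    have hm0 : m = 0 := by omega
    rw [hm'] at hm0
    have hempty := Finset.card_eq_zero.1 hm0
    have hall : ∀ t, t < q → ((s t < s (t+1)) ↔ (s (t+1) < s (t+2))) := by
      intro t ht
      by_contra hc
      have : t ∈ (Finset.range q).filter
          (fun t => (s (t+1) - s t) * (s (t+2) - s (t+1)) < 0) := by
        rw [Finset.mem_filter]
        exact ⟨Finset.mem_range.2 ht, (hiff t).2 hc⟩
      rw [hempty] at this
      exact absurd this (Finset.notMem_empty t)
    have hconst : ∀ t, t < q → ((s t < s (t+1)) ↔ (s 0 < s 1)) := by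
      intro t
      induction t with
      | zero => intro _; rfl
      | succ n ih =>
        intro h
        have hn : n < q := by omega
        rw [show n + 1 + 1 = n + 2 from rfl, ← hall n hn]
        exact ih hn
    -- min point
    have hnemp : P.Nonempty := ⟨x0, (hmemP x0).2 ⟨0, hq0, rfl⟩⟩
    have hfP : ∀ y ∈ P, f y ∈ P := by
      intro y hy
      obtain ⟨t, ht, rfl⟩ := (hmemP y).1 hy
      rw [hstep]
      exact (hmemP _).2 ⟨(t + 1) % q, Nat.mod_lt _ hq0, (hmod (t + 1)).symm⟩
    obtain ⟨tmin, htminq, htmin⟩ := (hmemP (P.min' hnemp)).1 (P.min'_mem hnemp)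
    obtain ⟨tmax, htmaxq, htmax⟩ := (hmemP (P.max' hnemp)).1 (P.max'_mem hnemp)
    have hσmin : s tmin < s (tmin + 1) := by
      have h1 : s (tmin + 1) ∈ P := by
        rw [← hstep]; exact hfP _ (htmin ▸ P.min'_mem hnemp)
      have h2 : s tmin ≤ s (tmin + 1) := htmin ▸ P.min'_le _ h1
      exact lt_of_le_of_ne h2 (hne1 tmin)
    have hσmax : ¬ (s tmax < s (tmax + 1)) := by
      have h1 : s (tmax + 1) ∈ P := by
        rw [← hstep]; exact hfP _ (htmax ▸ P.max'_mem hnemp)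
      have h2 : s (tmax + 1) ≤ s tmax := htmax ▸ P.le_max' _ h1
      exact not_lt.2 h2
    exact hσmax ((hconst tmax htmaxq).2 ((hconst tmin htminq).1 hσmin))
  exact ⟨heven, hpos, hmq⟩
end

section
/- If a cycle P of period m of a continuous interval map has over-rotation pair (k, m) and has block structure with q points in every block, then q divides both k and m. -/
open scoped Classical

/-- A permutation of `Fin N` is cyclic if every point can be reached from every point. -/
def IsCyclicPerm {N : ℕ} (σ : Equiv.Perm (Fin N)) : Prop :=
  ∀ i j : Fin N, ∃ t : ℕ, (σ ^ t) i = j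

/-- If a cycle `P = {x 0 < x 1 < ⋯ < x (m-1)}` of period `m` of a continuous interval map
`f` has over-rotation pair `(k, m)` (i.e. `2k` is the number of points of the cycle at
which the displacement changes sign) and `P` has block structure with `q` points in every
block, then `q` divides both `k` and `m`. -/
theorem stmt2 (m k q : ℕ) (f : ℝ → ℝ) (hf : Continuous f)
    (x : Fin m → ℝ) (hx : StrictMono x) (σ : Equiv.Perm (Fin m))
    (hcyc : IsCyclicPerm σ) (hfx : ∀ i, f (x i) = x (σ i))
    (hq : 1 < q) (hb : 1 < m / q) (hqm : q ∣ m)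
    (hblock : ∀ i i' : Fin m, (i : ℕ) / q = (i' : ℕ) / q →
      ((σ i : ℕ)) / q = ((σ i' : ℕ)) / q)
    (hk : 2 * k =
      (Finset.univ.filter
        (fun i : Fin m => (f (x i) - x i) * (f (f (x i)) - f (x i)) < 0)).card) :
    q ∣ k ∧ q ∣ m := by
  refine ⟨?_, hqm⟩
  have hq0 : 0 < q := by omega
  have hm : m = q * (m / q) := (Nat.mul_div_cancel' hqm).symm
  have hm2q : 2 * q ≤ m := by nlinarith [hm, hb]
  have hm0 : 0 < m := by omega
  -- no fixed blocks
  have horb : ∀ (i : Fin m), ((σ i : ℕ)) / q = (i : ℕ) / q →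
      ∀ t : ℕ, (((σ ^ t) i : ℕ)) / q = (i : ℕ) / q := by
    intro i h t
    induction t with
    | zero => simp
    | succ t ih =>
      have : (σ ^ (t + 1)) i = σ ((σ ^ t) i) := by
        rw [pow_succ', Equiv.Perm.mul_apply]
      rw [this]
      rw [hblock ((σ ^ t) i) i ih, h]
  have hnofix : ∀ i : Fin m, ((σ i : ℕ)) / q ≠ (i : ℕ) / q := by
    intro i h
    -- pick j in a different block
    have hqltm : q < m := by omega
    by_cases h0 : (i : ℕ) / q = 0
    · obtain ⟨t, ht⟩ := hcyc i ⟨q, hqltm⟩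
      have := horb i h t
      rw [ht] at this
      simp [Nat.div_self hq0] at this
      omega
    · obtain ⟨t, ht⟩ := hcyc i ⟨0, hm0⟩
      have := horb i h t
      rw [ht] at this
      simp [Nat.zero_div] at this
      omega
  have hne : ∀ i : Fin m, σ i ≠ i := by
    intro i h
    exact hnofix i (by rw [h])
  -- comparison via blocks
  have hdiv : ∀ a b : ℕ, a / q ≠ b / q → (a < b ↔ a / q < b / q) := by
    intro a b hab
    constructor
    · intro h
      exact lt_of_le_of_ne (Nat.div_le_div_right h.le) hab
    · exact Nat.lt_of_div_lt_div
  set s : Fin m → Prop := fun i => (i : ℕ) / q < ((σ i : ℕ)) / q with hs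
  have hlt : ∀ i : Fin m, (i < σ i ↔ s i) := by
    intro i
    have := hdiv (i : ℕ) (σ i : ℕ) (fun h => hnofix i h.symm)
    rw [Fin.lt_def]
    exact this
  have hgt : ∀ i : Fin m, (σ i < i ↔ ¬ s i) := by
    intro i
    constructor
    · intro h hsi
      exact absurd ((hlt i).2 hsi) (asymm h)
    · intro h
      rcases lt_trichotomy (σ i) i with h1 | h1 | h1
      · exact h1
      · exact absurd h1 (hne i)
      · exact absurd ((hlt i).1 h1) h
  -- rewrite the sign-change condition
  have hcond : ∀ i : Fin m,
      ((f (x i) - x i) * (f (f (x i)) - f (x i)) < 0 ↔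
        (s i ∧ ¬ s (σ i)) ∨ (¬ s i ∧ s (σ i))) := by
    intro i
    rw [hfx i, hfx (σ i)]
    rw [mul_neg_iff]
    have h1 : 0 < x (σ i) - x i ↔ s i := by
      rw [sub_pos, hx.lt_iff_lt]; exact hlt i
    have h2 : x (σ i) - x i < 0 ↔ ¬ s i := by
      rw [sub_neg, hx.lt_iff_lt]; exact hgt i
    have h3 : 0 < x (σ (σ i)) - x (σ i) ↔ s (σ i) := by
      rw [sub_pos, hx.lt_iff_lt]; exact hlt (σ i)
    have h4 : x (σ (σ i)) - x (σ i) < 0 ↔ ¬ s (σ i) := by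
      rw [sub_neg, hx.lt_iff_lt]; exact hgt (σ i)
    rw [h1, h2, h3, h4]
  have hfilt : (Finset.univ.filter
        (fun i : Fin m => (f (x i) - x i) * (f (f (x i)) - f (x i)) < 0))
      = Finset.univ.filter (fun i : Fin m => (s i ∧ ¬ s (σ i)) ∨ (¬ s i ∧ s (σ i))) := by
    apply Finset.filter_congr
    intro i _
    exact hcond i
  rw [hfilt] at hk
  -- split the filter
  have hsplit : (Finset.univ.filter
        (fun i : Fin m => (s i ∧ ¬ s (σ i)) ∨ (¬ s i ∧ s (σ i)))).card
      = (Finset.univ.filter (fun i : Fin m => s i ∧ ¬ s (σ i))).card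
        + (Finset.univ.filter (fun i : Fin m => ¬ s i ∧ s (σ i))).card := by
    rw [Finset.filter_or]
    apply Finset.card_union_of_disjoint
    rw [Finset.disjoint_filter]
    tauto
  rw [hsplit] at hk
  -- the two counts are equal
  have hcardeq : (Finset.univ.filter (fun i : Fin m => s (σ i))).card
      = (Finset.univ.filter (fun i : Fin m => s i)).card := by
    apply Finset.card_bij (fun i _ => σ i)
    · intro a ha
      simp only [Finset.mem_filter, Finset.mem_univ, true_and] at ha ⊢
      exact ha
    · intro a _ b _ h
      exact σ.injective h
    · intro b hb
      simp only [Finset.mem_filter, Finset.mem_univ, true_and] at hb ⊢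
      exact ⟨σ⁻¹ b, by simp [hb], by simp⟩
  have hsum1 : (Finset.univ.filter (fun i : Fin m => s i ∧ s (σ i))).card
      + (Finset.univ.filter (fun i : Fin m => s i ∧ ¬ s (σ i))).card
      = (Finset.univ.filter (fun i : Fin m => s i)).card := by
    rw [← Finset.filter_filter, ← Finset.filter_filter]
    exact Finset.card_filter_add_card_filter_not _
  have hsum2 : (Finset.univ.filter (fun i : Fin m => s i ∧ s (σ i))).card
      + (Finset.univ.filter (fun i : Fin m => ¬ s i ∧ s (σ i))).card
      = (Finset.univ.filter (fun i : Fin m => s (σ i))).card := by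
    have e1 : (Finset.univ.filter (fun i : Fin m => s i ∧ s (σ i)))
        = (Finset.univ.filter (fun i : Fin m => s (σ i) ∧ s i)) := by
      apply Finset.filter_congr; intro i _; tauto
    have e2 : (Finset.univ.filter (fun i : Fin m => ¬ s i ∧ s (σ i)))
        = (Finset.univ.filter (fun i : Fin m => s (σ i) ∧ ¬ s i)) := by
      apply Finset.filter_congr; intro i _; tauto
    rw [e1, e2, ← Finset.filter_filter, ← Finset.filter_filter]
    exact Finset.card_filter_add_card_filter_not _
  have hBC : (Finset.univ.filter (fun i : Fin m => s i ∧ ¬ s (σ i))).card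
      = (Finset.univ.filter (fun i : Fin m => ¬ s i ∧ s (σ i))).card := by
    omega
  have hkB : k = (Finset.univ.filter (fun i : Fin m => s i ∧ ¬ s (σ i))).card := by
    omega
  rw [hkB]
  -- block invariance of the predicate
  set P : Fin m → Prop := fun i => s i ∧ ¬ s (σ i) with hP
  have hPblock : ∀ i i' : Fin m, (i : ℕ) / q = (i' : ℕ) / q → (P i ↔ P i') := by
    intro i i' h
    have h1 := hblock i i' h
    have h2 := hblock (σ i) (σ i') h1
    simp only [hP, hs]
    rw [h, h1, h2]
  -- fiberwise counting
  have hfib := Finset.card_eq_sum_card_fiberwise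
    (f := fun i : Fin m => (i : ℕ) / q)
    (s := Finset.univ.filter P)
    (t := Finset.image (fun i : Fin m => (i : ℕ) / q) Finset.univ)
    (fun a _ => Finset.mem_image_of_mem _ (Finset.mem_univ a))
  rw [hfib]
  apply Finset.dvd_sum
  intro b _
  by_cases hwit : ∃ i₀ : Fin m, (i₀ : ℕ) / q = b ∧ P i₀
  · obtain ⟨i₀, hi₀b, hi₀P⟩ := hwit
    have heq : (Finset.univ.filter P).filter (fun i : Fin m => (i : ℕ) / q = b)
        = Finset.univ.filter (fun i : Fin m => (i : ℕ) / q = b) := by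
      ext i
      simp only [Finset.mem_filter, Finset.mem_univ, true_and]
      constructor
      · tauto
      · intro hib
        exact ⟨(hPblock i i₀ (by rw [hib, hi₀b])).2 hi₀P, hib⟩
    rw [heq]
    -- this fiber is a full block of size q
    have hbn : b < m / q := by
      rw [← hi₀b]
      exact Nat.div_lt_div_of_lt_of_dvd hqm i₀.isLt
    have hbm : ∀ t : Fin q, q * b + (t : ℕ) < m := by
      intro t
      have h1 : q * (b + 1) ≤ q * (m / q) := Nat.mul_le_mul_left q hbn
      have h2 : q * (b + 1) = q * b + q := by ring
      have := t.isLt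
      omega
    have hcard : (Finset.univ.filter (fun i : Fin m => (i : ℕ) / q = b)).card = q := by
      have hemb : Function.Injective
          (fun t : Fin q => (⟨q * b + (t : ℕ), hbm t⟩ : Fin m)) := by
        intro t₁ t₂ h
        have := Fin.val_eq_of_eq h
        simp only at this
        exact Fin.ext (by omega)
      have himg : Finset.univ.filter (fun i : Fin m => (i : ℕ) / q = b)
          = Finset.map ⟨_, hemb⟩ Finset.univ := by
        ext i
        simp only [Finset.mem_filter, Finset.mem_univ, true_and, Finset.mem_map,
          Function.Embedding.coeFn_mk]
        constructor
        · intro hib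
          refine ⟨⟨(i : ℕ) % q, Nat.mod_lt _ hq0⟩, ?_⟩
          apply Fin.ext
          simp only
          rw [← hib]
          exact Nat.div_add_mod _ _
        · rintro ⟨t, rfl⟩
          simp only
          rw [Nat.mul_add_div hq0, Nat.div_eq_of_lt t.isLt]
          omega
      rw [himg, Finset.card_map, Finset.card_univ, Fintype.card_fin]
    rw [hcard]
  · have heq : (Finset.univ.filter P).filter (fun i : Fin m => (i : ℕ) / q = b)
        = ∅ := by
      ext i
      simp only [Finset.mem_filter, Finset.mem_univ, true_and, Finset.notMem_empty,
        iff_false, not_and]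
      intro hPi hib
      exact hwit ⟨i, hib, hPi⟩
    rw [heq]
    simp
end

section
/- When collapsing each block of a cycle P with block structure to a point, the resulting cycle Q has the same over-rotation number as P; that is, if orp(P) = (k, m) and P has blocks of size q, then orp(Q) = (k/q, m/q). -/
/-- The number of points of a combinatorial cycle `σ` at which the displacement changes
sign; the over-rotation pair of `σ` is `(orc σ / 2, N)`. -/
def orc {N : ℕ} (σ : Equiv.Perm (Fin N)) : ℕ :=
  (Finset.univ.filter fun i : Fin N =>
    (((σ i : ℕ) : ℤ) - ((i : ℕ) : ℤ)) * (((σ (σ i) : ℕ) : ℤ) - ((σ i : ℕ) : ℤ)) < 0).card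

/-- Around any cycle, the number of sign changes of any predicate is even. -/
lemma orc_parity_aux {n : ℕ} (ρ : Equiv.Perm (Fin n)) (P : Fin n → Prop) [DecidablePred P] :
    2 ∣ (Finset.univ.filter fun j => ¬ (P j ↔ P (ρ j))).card := by
  have h : (((Finset.univ.filter fun j => ¬ (P j ↔ P (ρ j))).card : ℕ) : ZMod 2) = 0 := by
    rw [Finset.card_filter]
    push_cast
    have key : ∀ j : Fin n, ((if ¬ (P j ↔ P (ρ j)) then (1:ZMod 2) else 0)) =
        (if P j then (1:ZMod 2) else 0) + (if P (ρ j) then (1:ZMod 2) else 0) := by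
      intro j
      by_cases h1 : P j <;> by_cases h2 : P (ρ j) <;> simp [h1, h2] <;> decide
    rw [Finset.sum_congr rfl fun j _ => key j, Finset.sum_add_distrib]
    rw [Equiv.sum_comp ρ (fun j => if P j then (1:ZMod 2) else 0)]
    rw [← two_mul, show (2:ZMod 2) = 0 from rfl, zero_mul]
  exact (ZMod.natCast_eq_zero_iff _ 2).mp h

/-- Counting lemma: a block-constant predicate on `Fin (b*q)` has `q` times as many
witnesses as the induced predicate on blocks. -/
lemma orc_counting_aux {b q : ℕ} (hq : 0 < q) (C : Fin b → Prop) [DecidablePred C]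
    (m : ℕ) (hm : m = b * q) (f : Fin m → Fin b)
    (hf : ∀ i : Fin m, (f i : ℕ) = (i : ℕ) / q) :
    (Finset.univ.filter fun i : Fin m => C (f i)).card
      = q * (Finset.univ.filter C).card := by
  subst hm
  have he : ∀ p : Fin b × Fin q, f (finProdFinEquiv p) = p.1 := by
    intro p
    have hv : ((finProdFinEquiv p : Fin (b*q)) : ℕ) = (p.2 : ℕ) + q * (p.1 : ℕ) := rfl
    apply Fin.ext
    rw [hf, hv, Nat.add_mul_div_left _ _ hq, Nat.div_eq_of_lt p.2.isLt, Nat.zero_add]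
  rw [Finset.card_filter, Finset.card_filter]
  rw [← Equiv.sum_comp finProdFinEquiv (fun i => if C (f i) then 1 else 0)]
  simp only [Function.comp, he]
  rw [Fintype.sum_prod_type]
  simp only [apply_ite Finset.card, Finset.card_univ, Finset.card_empty, Fintype.card_fin,
    Finset.card_filter, Finset.mul_sum, mul_ite, mul_one, mul_zero]
  exact Finset.sum_congr rfl fun x _ => by by_cases h : C x <;> simp [h, Finset.sum_const]

/-- When collapsing each block (of size `q`) of a cycle `σ` with block structure to a
point, the resulting cycle `τ` (of period `b = m / q`) has the same over-rotation number:
if `orp(σ) = (k, m)` then `q ∣ k` and `orp(τ) = (k / q, m / q)`. -/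
theorem stmt4 (m q b k : ℕ) (hq : 1 < q) (hb : 1 < b) (hm : m = b * q)
    (σ : Equiv.Perm (Fin m)) (hcyc : IsCyclicPerm σ)
    (hblock : ∀ i i' : Fin m, (i : ℕ) / q = (i' : ℕ) / q →
      ((σ i : ℕ)) / q = ((σ i' : ℕ)) / q)
    (τ : Equiv.Perm (Fin b))
    (hτ : ∀ i : Fin m,
      (τ ⟨(i : ℕ) / q, Nat.div_lt_of_lt_mul (by rw [Nat.mul_comm q b, ← hm]; exact i.isLt)⟩ : ℕ)
        = (σ i : ℕ) / q)
    (hk : 2 * k = orc σ) :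
    q ∣ k ∧ 2 * (k / q) = orc τ := by
  have hq0 : 0 < q := by omega
  set J : Fin m → Fin b := fun i =>
    ⟨(i : ℕ) / q, Nat.div_lt_of_lt_mul (by rw [Nat.mul_comm q b, ← hm]; exact i.isLt)⟩ with hJdef
  have hJ : ∀ i : Fin m, (J i : ℕ) = (i : ℕ) / q := fun i => rfl
  have hστ : ∀ i : Fin m, J (σ i) = τ (J i) := by
    intro i
    apply Fin.ext
    rw [hJ]
    exact (hτ i).symm
  -- iterates commute with projection
  have hiter : ∀ (t : ℕ) (i : Fin m), J ((σ ^ t) i) = (τ ^ t) (J i) := by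
    intro t
    induction t with
    | zero => intro i; simp
    | succ t ih =>
      intro i
      have h1 : (σ ^ (t+1)) i = (σ ^ t) (σ i) := by rw [pow_succ, Equiv.Perm.mul_apply]
      have h2 : (τ ^ (t+1)) (J i) = (τ ^ t) (τ (J i)) := by rw [pow_succ, Equiv.Perm.mul_apply]
      rw [h1, h2, ih, hστ]
  -- τ is cyclic
  have τcyc : ∀ j j' : Fin b, ∃ t : ℕ, (τ ^ t) j = j' := by
    intro j j'
    have hlt1 : (j : ℕ) * q < m := by
      rw [hm]; exact (Nat.mul_lt_mul_right hq0).mpr j.isLt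
    have hlt2 : (j' : ℕ) * q < m := by
      rw [hm]; exact (Nat.mul_lt_mul_right hq0).mpr j'.isLt
    obtain ⟨t, ht⟩ := hcyc ⟨(j : ℕ) * q, hlt1⟩ ⟨(j' : ℕ) * q, hlt2⟩
    refine ⟨t, ?_⟩
    have h1 : J (⟨(j : ℕ) * q, hlt1⟩ : Fin m) = j := by
      apply Fin.ext; rw [hJ]; exact Nat.mul_div_cancel _ hq0
    have h2 : J (⟨(j' : ℕ) * q, hlt2⟩ : Fin m) = j' := by
      apply Fin.ext; rw [hJ]; exact Nat.mul_div_cancel _ hq0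
    rw [← h1, ← hiter, ht, h2]
  -- τ has no fixed points
  have hnofix : ∀ j : Fin b, τ j ≠ j := by
    intro j hfix
    have hall : ∀ t : ℕ, (τ ^ t) j = j := by
      intro t
      induction t with
      | zero => simp
      | succ t ih => rw [pow_succ, Equiv.Perm.mul_apply, hfix, ih]
    have hj' : (if (j : ℕ) = 0 then 1 else 0) < b := by split <;> omega
    obtain ⟨t, ht⟩ := τcyc j ⟨if (j : ℕ) = 0 then 1 else 0, hj'⟩
    rw [hall t] at ht
    have := congrArg (Fin.val) ht
    simp only at this
    split at this <;> omega
  -- blocks strictly separate points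
  have hneq : ∀ i : Fin m, (i : ℕ) / q ≠ ((σ i : ℕ)) / q := by
    intro i h
    apply hnofix (J i)
    rw [← hστ]
    apply Fin.ext
    rw [hJ, hJ, h]
  have mono : ∀ x y : ℕ, x / q < y / q → x < y := by
    intro x y h
    by_contra hc
    push_neg at hc
    exact absurd (Nat.div_le_div_right (c := q) hc) (by omega)
  have hlt : ∀ i : Fin m, ((i : ℕ) < (σ i : ℕ)) ↔ ((i : ℕ) / q < ((σ i : ℕ)) / q) := by
    intro i
    constructor
    · intro h
      rcases Nat.lt_or_ge ((i : ℕ) / q) (((σ i : ℕ)) / q) with h' | h'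
      · exact h'
      · have h'' : ((σ i : ℕ)) / q < (i : ℕ) / q := lt_of_le_of_ne h' (Ne.symm (hneq i))
        exact absurd (mono _ _ h'') (by omega)
    · exact mono _ _
  -- the sign predicate on blocks
  set P : Fin b → Prop := fun j => (j : ℕ) < (τ j : ℕ) with hPdef
  have hPJ : ∀ i : Fin m, P (J i) ↔ (i : ℕ) < (σ i : ℕ) := by
    intro i
    have hv : (τ (J i) : ℕ) = ((σ i : ℕ)) / q := hτ i
    rw [hPdef]
    simp only [hJ, hv]
    exact (hlt i).symm
  have hInofix : ∀ i : Fin m, (i : ℕ) ≠ (σ i : ℕ) := by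
    intro i h
    exact hneq i (by rw [h])
  -- condition on σ matches the block condition
  have condσ : ∀ i : Fin m,
      ((((σ i : ℕ) : ℤ) - ((i : ℕ) : ℤ)) * (((σ (σ i) : ℕ) : ℤ) - ((σ i : ℕ) : ℤ)) < 0)
        ↔ ¬ (P (J i) ↔ P (τ (J i))) := by
    intro i
    have h1 := hPJ i
    have h2 : P (τ (J i)) ↔ (σ i : ℕ) < (σ (σ i) : ℕ) := by rw [← hστ]; exact hPJ (σ i)
    have h3 := hInofix i
    have h4 := hInofix (σ i)
    rw [mul_neg_iff, h1, h2]
    omega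
  have condτ : ∀ j : Fin b,
      ((((τ j : ℕ) : ℤ) - ((j : ℕ) : ℤ)) * (((τ (τ j) : ℕ) : ℤ) - ((τ j : ℕ) : ℤ)) < 0)
        ↔ ¬ (P j ↔ P (τ j)) := by
    intro j
    have h3 : (τ j : ℕ) ≠ (j : ℕ) := fun h => hnofix j (Fin.ext h)
    have h4 : (τ (τ j) : ℕ) ≠ (τ j : ℕ) := fun h => hnofix (τ j) (Fin.ext h)
    rw [mul_neg_iff, hPdef]
    omega
  -- rewrite both orc's
  have horcσ : orc σ = (Finset.univ.filter fun i : Fin m => ¬ (P (J i) ↔ P (τ (J i)))).card := by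
    unfold orc
    congr 1
    exact Finset.filter_congr fun i _ => condσ i
  have horcτ : orc τ = (Finset.univ.filter fun j : Fin b => ¬ (P j ↔ P (τ j))).card := by
    unfold orc
    congr 1
    exact Finset.filter_congr fun j _ => condτ j
  have hcount : orc σ = q * (Finset.univ.filter fun j : Fin b => ¬ (P j ↔ P (τ j))).card := by
    rw [horcσ]
    exact orc_counting_aux hq0 (fun j => ¬ (P j ↔ P (τ j))) m hm J hJ
  obtain ⟨c', hc'⟩ := orc_parity_aux τ P
  have hkq : k = q * c' := by
    have h2 : 2 * k = 2 * (q * c') := by rw [hk, hcount, hc']; ring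
    omega
  refine ⟨⟨c', hkq⟩, ?_⟩
  rw [horcτ, hc', hkq, Nat.mul_div_cancel_left c' hq0]
end

section
/- A convergent cyclic pattern of period n ≥ 2 has over-rotation number exactly 1/2 if and only if it has a division. -/
/-- `σ` is convergent if there is a threshold `m < N` with `σ i > i` below it and
`σ i < i` at and above it (0-based version of: `π(i) > i` for `i ≤ m`, `π(i) < i`
for `i > m`). -/
def Convergent {N : ℕ} (σ : Equiv.Perm (Fin N)) : Prop :=
  ∃ m : ℕ, m < N ∧ ∀ i : Fin N,
    ((i : ℕ) < m → (i : ℕ) < (σ i : ℕ)) ∧ (m ≤ (i : ℕ) → (σ i : ℕ) < (i : ℕ))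

/-- `σ` (a permutation of `{1,…,2m}`, here 0-based) has division if the first `m` points
all map into the last `m` points. -/
def HasDivision {N : ℕ} (σ : Equiv.Perm (Fin N)) : Prop :=
  ∃ m : ℕ, 0 < m ∧ N = 2 * m ∧ ∀ i : Fin N, (i : ℕ) < m → m ≤ (σ i : ℕ)

/-- The lower set `{i : i < m}` in `Fin n` has `m` elements, for `m < n`. -/
lemma card_filter_lt {n m : ℕ} (hmn : m < n) :
    (Finset.univ.filter fun i : Fin n => (i : ℕ) < m).card = m := by
  have : (Finset.univ.filter fun i : Fin n => (i : ℕ) < m)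
      = Finset.Iio (⟨m, hmn⟩ : Fin n) := by
    ext i; simp [Fin.lt_def]
  rw [this, Fin.card_Iio]

/-- The upper set `{i : m ≤ i}` in `Fin n` has `n - m` elements, for `m < n`. -/
lemma card_filter_ge {n m : ℕ} (hmn : m < n) :
    (Finset.univ.filter fun i : Fin n => m ≤ (i : ℕ)).card = n - m := by
  have : (Finset.univ.filter fun i : Fin n => m ≤ (i : ℕ))
      = Finset.Ici (⟨m, hmn⟩ : Fin n) := by
    ext i; simp [Fin.le_def]
  rw [this, Fin.card_Ici]

/-- If a permutation of `Fin n` maps the lower half `{i : i < m}` (with `n = 2m`) into the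
upper half, then it maps the upper half into the lower half. -/
lemma upper_to_lower {n m : ℕ} (σ : Equiv.Perm (Fin n)) (hm : 0 < m) (hnm : n = 2 * m)
    (hdiv : ∀ i : Fin n, (i : ℕ) < m → m ≤ (σ i : ℕ)) :
    ∀ i : Fin n, m ≤ (i : ℕ) → (σ i : ℕ) < m := by
  have hmn : m < n := by omega
  set L : Finset (Fin n) := Finset.univ.filter fun i : Fin n => (i : ℕ) < m with hL
  set U : Finset (Fin n) := Finset.univ.filter fun i : Fin n => m ≤ (i : ℕ) with hU
  have himg : L.image σ = U := by
    apply Finset.eq_of_subset_of_card_le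
    · intro j hj
      simp only [hL, hU, Finset.mem_image, Finset.mem_filter, Finset.mem_univ, true_and] at hj ⊢
      obtain ⟨i, hi, rfl⟩ := hj
      exact hdiv i hi
    · rw [Finset.card_image_of_injective _ σ.injective, hL, hU,
        card_filter_lt hmn, card_filter_ge hmn]
      omega
  intro i hi
  by_contra hcon
  push_neg at hcon
  have : σ i ∈ L.image σ := by
    rw [himg]; simp [hU, hcon]
  obtain ⟨j, hj, hji⟩ := Finset.mem_image.mp this
  simp only [hL, Finset.mem_filter, Finset.mem_univ, true_and] at hj
  have : j = i := σ.injective hji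
  omega

/-- A convergent cyclic pattern of period `n ≥ 2` has over-rotation number exactly `1/2`
if and only if it has a division. -/
theorem stmt5 (n : ℕ) (hn : 2 ≤ n) (σ : Equiv.Perm (Fin n))
    (hcyc : IsCyclicPerm σ) (hconv : Convergent σ) :
    (orc σ : ℚ) / (2 * n) = 1 / 2 ↔ HasDivision σ := by
  have hn0 : (0 : ℚ) < (n : ℚ) := by exact_mod_cast (by omega : (0:ℕ) < n)
  -- reduce the rational equation to `orc σ = n`
  have hrat : ((orc σ : ℚ) / (2 * n) = 1 / 2) ↔ orc σ = n := by
    constructor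
    · intro h
      have h2 : (orc σ : ℚ) = n := by
        field_simp at h
        linarith
      exact_mod_cast h2
    · intro h
      rw [h]
      field_simp
  rw [hrat]
  constructor
  · -- forward: orc σ = n → division
    intro horc
    obtain ⟨m, hmn, hm⟩ := hconv
    have hm1 : 0 < m := by
      by_contra h
      push_neg at h
      have h0 : (0 : ℕ) < n := by omega
      have := (hm ⟨0, h0⟩).2 (by omega)
      simp at this
    -- the orc filter set equals the "sign change" set
    have hsgn : ∀ i : Fin n, ((i : ℕ) < m ↔ (i : ℕ) < (σ i : ℕ)) := by
      intro i
      constructor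
      · exact (hm i).1
      · intro h
        by_contra hc
        push_neg at hc
        have := (hm i).2 hc
        omega
    have hfilt : (Finset.univ.filter fun i : Fin n =>
        (((σ i : ℕ) : ℤ) - ((i : ℕ) : ℤ)) * (((σ (σ i) : ℕ) : ℤ) - ((σ i : ℕ) : ℤ)) < 0)
        = (Finset.univ.filter fun i : Fin n => (i : ℕ) < m ∧ m ≤ (σ i : ℕ)) ∪
          (Finset.univ.filter fun i : Fin n => m ≤ (i : ℕ) ∧ (σ i : ℕ) < m) := by
      ext i
      simp only [Finset.mem_filter, Finset.mem_univ, true_and, Finset.mem_union]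
      have h1 := hsgn i
      have h2 := hsgn (σ i)
      constructor
      · intro h
        rcases lt_or_ge (i : ℕ) m with hi | hi
        · left
          refine ⟨hi, ?_⟩
          by_contra hc
          push_neg at hc
          have a1 : (0:ℤ) < ((σ i : ℕ) : ℤ) - ((i : ℕ) : ℤ) := by
            have := h1.mp hi; omega
          have a2 : (0:ℤ) < ((σ (σ i) : ℕ) : ℤ) - ((σ i : ℕ) : ℤ) := by
            have := h2.mp hc; omega
          nlinarith
        · right
          refine ⟨hi, ?_⟩
          by_contra hc
          push_neg at hc
          have a1 : ((σ i : ℕ) : ℤ) - ((i : ℕ) : ℤ) < 0 := by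
            have : ¬ ((i:ℕ) < (σ i : ℕ)) := fun hh => by have := h1.mpr hh; omega
            have hne : (σ i : ℕ) ≠ (i : ℕ) := by
              intro he
              exact absurd (Fin.ext (by omega) : σ i = i)
                (by intro hfix
                    have := (hm i).2 hi
                    omega)
            omega
          have a2 : ((σ (σ i) : ℕ) : ℤ) - ((σ i : ℕ) : ℤ) < 0 := by
            have h3 := (hm (σ i)).2 hc
            omega
          nlinarith
      · intro h
        rcases h with ⟨hi, hsi⟩ | ⟨hi, hsi⟩
        · have a1 : (0:ℤ) < ((σ i : ℕ) : ℤ) - ((i : ℕ) : ℤ) := by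
            have := h1.mp hi; omega
          have a2 : ((σ (σ i) : ℕ) : ℤ) - ((σ i : ℕ) : ℤ) < 0 := by
            have := (hm (σ i)).2 hsi; omega
          nlinarith
        · have a1 : ((σ i : ℕ) : ℤ) - ((i : ℕ) : ℤ) < 0 := by
            have := (hm i).2 hi; omega
          have a2 : (0:ℤ) < ((σ (σ i) : ℕ) : ℤ) - ((σ i : ℕ) : ℤ) := by
            have := h1  -- unused
            have := (hsgn (σ i)).mp hsi
            omega
          nlinarith
    set X := Finset.univ.filter fun i : Fin n => (i : ℕ) < m ∧ m ≤ (σ i : ℕ) with hX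
    set Y := Finset.univ.filter fun i : Fin n => m ≤ (i : ℕ) ∧ (σ i : ℕ) < m with hY
    have hdisj : Disjoint X Y := by
      rw [Finset.disjoint_left]
      intro a ha hb
      simp only [hX, hY, Finset.mem_filter] at ha hb
      omega
    have hcard : X.card + Y.card = n := by
      have : orc σ = (X ∪ Y).card := by rw [orc, hfilt]
      rw [Finset.card_union_of_disjoint hdisj] at this
      omega
    have hXsub : X ⊆ Finset.univ.filter fun i : Fin n => (i : ℕ) < m := by
      intro a ha
      simp only [hX, Finset.mem_filter] at ha ⊢
      exact ⟨ha.1, ha.2.1⟩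
    have hYsub : Y ⊆ Finset.univ.filter fun i : Fin n => m ≤ (i : ℕ) := by
      intro a ha
      simp only [hY, Finset.mem_filter] at ha ⊢
      exact ⟨ha.1, ha.2.1⟩
    have hXle : X.card ≤ m := by
      have := Finset.card_le_card hXsub
      rwa [card_filter_lt hmn] at this
    have hYle : Y.card ≤ n - m := by
      have := Finset.card_le_card hYsub
      rwa [card_filter_ge hmn] at this
    have hXm : X.card = m := by omega
    have hYm : Y.card = n - m := by omega
    have hXeq : X = Finset.univ.filter fun i : Fin n => (i : ℕ) < m :=
      Finset.eq_of_subset_of_card_le hXsub (by rw [card_filter_lt hmn, hXm])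
    have hdiv : ∀ i : Fin n, (i : ℕ) < m → m ≤ (σ i : ℕ) := by
      intro i hi
      have : i ∈ X := by
        rw [hXeq]; simp [hi]
      simp only [hX, Finset.mem_filter] at this
      exact this.2.2
    -- n = 2 * m
    have hle1 : m ≤ n - m := by
      have hmap : Set.MapsTo σ ↑(Finset.univ.filter fun i : Fin n => (i : ℕ) < m)
          ↑(Finset.univ.filter fun i : Fin n => m ≤ (i : ℕ)) := by
        intro a ha
        simp only [Finset.coe_filter, Finset.mem_univ, true_and, Set.mem_setOf_eq] at ha ⊢
        exact hdiv a ha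
      have := Finset.card_le_card_of_injOn σ hmap (fun a _ b _ h => σ.injective h)
      rwa [card_filter_lt hmn, card_filter_ge hmn] at this
    have hYeq : Y = Finset.univ.filter fun i : Fin n => m ≤ (i : ℕ) :=
      Finset.eq_of_subset_of_card_le hYsub (by rw [card_filter_ge hmn, hYm])
    have hdiv2 : ∀ i : Fin n, m ≤ (i : ℕ) → (σ i : ℕ) < m := by
      intro i hi
      have : i ∈ Y := by rw [hYeq]; simp [hi]
      simp only [hY, Finset.mem_filter] at this
      exact this.2.2
    have hle2 : n - m ≤ m := by
      have hmap : Set.MapsTo σ ↑(Finset.univ.filter fun i : Fin n => m ≤ (i : ℕ))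
          ↑(Finset.univ.filter fun i : Fin n => (i : ℕ) < m) := by
        intro a ha
        simp only [Finset.coe_filter, Finset.mem_univ, true_and, Set.mem_setOf_eq] at ha ⊢
        exact hdiv2 a ha
      have := Finset.card_le_card_of_injOn σ hmap (fun a _ b _ h => σ.injective h)
      rwa [card_filter_ge hmn, card_filter_lt hmn] at this
    exact ⟨m, hm1, by omega, hdiv⟩
  · -- backward: division → orc σ = n
    rintro ⟨m, hm0, hnm, hdiv⟩
    have hup := upper_to_lower σ hm0 hnm hdiv
    have : (Finset.univ.filter fun i : Fin n =>
        (((σ i : ℕ) : ℤ) - ((i : ℕ) : ℤ)) * (((σ (σ i) : ℕ) : ℤ) - ((σ i : ℕ) : ℤ)) < 0)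
        = Finset.univ := by
      apply Finset.eq_univ_of_forall
      intro i
      simp only [Finset.mem_filter, Finset.mem_univ, true_and]
      rcases lt_or_ge (i : ℕ) m with hi | hi
      · have h1 := hdiv i hi
        have h2 := hup (σ i) h1
        apply mul_neg_of_pos_of_neg <;> push_cast <;> omega
      · have h1 := hup i hi
        have h2 := hdiv (σ i) h1
        apply mul_neg_of_neg_of_pos <;> push_cast <;> omega
    rw [orc, this, Finset.card_univ, Fintype.card_fin]
end

section
/- For a convergent cycle P of the P-linear map f with unique fixed point a, the first coordinate p of the over-rotation pair of P equals the number of points of P lying to the left of a that are mapped to the right of a, and also equals the number of points of P lying to the right of a that are mapped to the left of a. -/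
open scoped Classical

/-- Let `P = {x 0 < ⋯ < x (q-1)}` be a convergent cycle of the `P`-linear map `f`, which
(being convergent) has a unique fixed point `a`, not in `P`. If `(p, q)` is the
over-rotation pair of `P` (i.e. `2p` is the number of points of `P` at which the
displacement changes sign), then `p` equals the number of points of `P` lying to the left
of `a` that are mapped to the right of `a`, and also equals the number of points of `P`
lying to the right of `a` that are mapped to the left of `a`. -/
theorem stmt6 (q : ℕ) (hq : 1 < q) (f : ℝ → ℝ) (hf : Continuous f)
    (a : ℝ) (hfix : ∀ y : ℝ, f y = y ↔ y = a)
    (x : Fin q → ℝ) (hx : StrictMono x) (σ : Equiv.Perm (Fin q))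
    (hcyc : IsCyclicPerm σ) (hfx : ∀ i, f (x i) = x (σ i))
    (ha : ∀ i, x i ≠ a)
    (p : ℕ)
    (hp : 2 * p =
      (Finset.univ.filter
        (fun i : Fin q => (f (x i) - x i) * (f (f (x i)) - f (x i)) < 0)).card) :
    p = (Finset.univ.filter (fun i : Fin q => x i < a ∧ a < f (x i))).card ∧
    p = (Finset.univ.filter (fun i : Fin q => a < x i ∧ f (x i) < a)).card := by
  classical
  have hne : ∀ i : Fin q, f (x i) ≠ x i := fun i h => ha i ((hfix (x i)).mp h)
  have hxa : ∀ i : Fin q, f (x i) ≠ a := by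
    intro i; rw [hfx i]; exact ha (σ i)
  have hg : Continuous (fun y : ℝ => f y - y) := hf.sub continuous_id
  have hgne : ∀ y : ℝ, y ≠ a → f y - y ≠ 0 := by
    intro y hy h
    exact hy ((hfix y).mp (by linarith))
  have hcross : ∀ u v : ℝ, f u - u < 0 → 0 < f v - v → a ∈ Set.uIcc u v := by
    intro u v hu hv
    obtain ⟨z, hz, hz0⟩ := intermediate_value_uIcc (f := fun y : ℝ => f y - y)
      hg.continuousOn (Set.mem_uIcc.mpr (Or.inl ⟨hu.le, hv.le⟩))
    have hfz : f z = z := by dsimp at hz0; linarith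
    rwa [(hfix z).mp hfz] at hz
  set i0 : Fin q := ⟨0, by omega⟩ with hi0
  set iN : Fin q := ⟨q - 1, by omega⟩ with hiN
  have h0 : 0 < f (x i0) - x i0 := by
    have hle : x i0 ≤ x (σ i0) := hx.monotone (by simp [hi0, Fin.le_def])
    have hne0 := hne i0
    rw [hfx i0] at hne0 ⊢
    rcases lt_or_eq_of_le hle with h | h
    · linarith
    · exact absurd h.symm hne0
  have hN : f (x iN) - x iN < 0 := by
    have hle : x (σ iN) ≤ x iN := hx.monotone (by
      have := (σ iN).isLt
      simp [hiN, Fin.le_def]; omega)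
    have hneN := hne iN
    rw [hfx iN] at hneN ⊢
    rcases lt_or_eq_of_le hle with h | h
    · linarith
    · exact absurd h hneN
  have h0N : x i0 ≤ x iN := hx.monotone (by simp [hi0, hiN, Fin.le_def])
  have hmem := hcross _ _ hN h0
  rw [Set.mem_uIcc] at hmem
  have h0a : x i0 < a := by
    rcases hmem with ⟨h1, h2⟩ | ⟨h1, h2⟩
    · exact lt_of_le_of_ne (h0N.trans h1) (ha i0)
    · exact lt_of_le_of_ne h1 (ha i0)
  have hNa : a < x iN := by
    rcases hmem with ⟨h1, h2⟩ | ⟨h1, h2⟩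
    · exact lt_of_le_of_ne (h2.trans h0N) (Ne.symm (ha iN))
    · exact lt_of_le_of_ne h2 (Ne.symm (ha iN))
  have hL : ∀ y : ℝ, y < a → 0 < f y - y := by
    intro y hy
    by_contra h
    push_neg at h
    have hy' : f y - y < 0 := lt_of_le_of_ne h (hgne y (ne_of_lt hy))
    have := hcross _ _ hy' h0
    rw [Set.mem_uIcc] at this
    rcases this with ⟨h1, h2⟩ | ⟨h1, h2⟩ <;> linarith
  have hR : ∀ y : ℝ, a < y → f y - y < 0 := by
    intro y hy
    by_contra h
    push_neg at h
    have hy' : 0 < f y - y := lt_of_le_of_ne h (Ne.symm (hgne y (ne_of_gt hy)))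
    have := hcross _ _ hN hy'
    rw [Set.mem_uIcc] at this
    rcases this with ⟨h1, h2⟩ | ⟨h1, h2⟩ <;> linarith
  -- characterization of the sign-change condition
  have hcond : ∀ i : Fin q,
      ((f (x i) - x i) * (f (f (x i)) - f (x i)) < 0) ↔
      ((x i < a ∧ a < f (x i)) ∨ (a < x i ∧ f (x i) < a)) := by
    intro i
    rcases (ha i).lt_or_gt with h1 | h1
    · have d1 : 0 < f (x i) - x i := hL _ h1
      rcases (hxa i).lt_or_gt with h2 | h2
      · have d2 : 0 < f (f (x i)) - f (x i) := hL _ h2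
        constructor
        · intro h; nlinarith
        · rintro (⟨_, h⟩ | ⟨h, _⟩) <;> linarith
      · have d2 : f (f (x i)) - f (x i) < 0 := hR _ h2
        constructor
        · intro _; exact Or.inl ⟨h1, h2⟩
        · intro _; nlinarith
    · have d1 : f (x i) - x i < 0 := hR _ h1
      rcases (hxa i).lt_or_gt with h2 | h2
      · have d2 : 0 < f (f (x i)) - f (x i) := hL _ h2
        constructor
        · intro _; exact Or.inr ⟨h1, h2⟩
        · intro _; nlinarith
      · have d2 : f (f (x i)) - f (x i) < 0 := hR _ h2
        constructor
        · intro h; nlinarith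
        · rintro (⟨h, _⟩ | ⟨_, h⟩) <;> linarith
  -- the crossing sets, in terms of σ
  set A : Finset (Fin q) := Finset.univ.filter (fun i => x i < a ∧ a < x (σ i)) with hA
  set B : Finset (Fin q) := Finset.univ.filter (fun i => a < x i ∧ x (σ i) < a) with hB
  set C : Finset (Fin q) := Finset.univ.filter (fun i => x i < a ∧ x (σ i) < a) with hC
  have hAf : Finset.univ.filter (fun i : Fin q => x i < a ∧ a < f (x i)) = A := by
    apply Finset.filter_congr; intro i _; simp [hfx i]
  have hBf : Finset.univ.filter (fun i : Fin q => a < x i ∧ f (x i) < a) = B := by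
    apply Finset.filter_congr; intro i _; simp [hfx i]
  have hsplit : Finset.univ.filter
      (fun i : Fin q => (f (x i) - x i) * (f (f (x i)) - f (x i)) < 0) = A ∪ B := by
    ext i
    simp only [Finset.mem_filter, Finset.mem_univ, true_and, Finset.mem_union, hA, hB]
    rw [hcond i, hfx i]
  have hdisjAB : Disjoint A B := by
    rw [Finset.disjoint_left]
    intro i hiA hiB
    simp only [hA, hB, Finset.mem_filter] at hiA hiB
    linarith [hiA.2.1, hiB.2.1]
  have hcardAB : 2 * p = A.card + B.card := by
    rw [hp, hsplit, Finset.card_union_of_disjoint hdisjAB]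
  -- counting: |A| = |B|
  have hcount : (Finset.univ.filter (fun i : Fin q => x (σ i) < a)).card
      = (Finset.univ.filter (fun i : Fin q => x i < a)).card := by
    apply Finset.card_bij (fun i _ => σ i)
    · intro i hi
      simp only [Finset.mem_filter, Finset.mem_univ, true_and] at hi ⊢
      exact hi
    · intro i _ j _ h
      exact σ.injective h
    · intro j hj
      refine ⟨σ.symm j, ?_, by simp⟩
      simp only [Finset.mem_filter, Finset.mem_univ, true_and] at hj ⊢
      simpa using hj
  have e1 : Finset.univ.filter (fun i : Fin q => x i < a) = C ∪ A := by
    ext i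
    simp only [Finset.mem_filter, Finset.mem_univ, true_and, Finset.mem_union, hA, hC]
    constructor
    · intro h
      rcases (ha (σ i)).lt_or_gt with h2 | h2
      · exact Or.inl ⟨h, h2⟩
      · exact Or.inr ⟨h, h2⟩
    · rintro (⟨h, _⟩ | ⟨h, _⟩) <;> exact h
  have e2 : Finset.univ.filter (fun i : Fin q => x (σ i) < a) = C ∪ B := by
    ext i
    simp only [Finset.mem_filter, Finset.mem_univ, true_and, Finset.mem_union, hB, hC]
    constructor
    · intro h
      rcases (ha i).lt_or_gt with h2 | h2
      · exact Or.inl ⟨h2, h⟩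
      · exact Or.inr ⟨h2, h⟩
    · rintro (⟨_, h⟩ | ⟨_, h⟩) <;> exact h
  have hdCA : Disjoint C A := by
    rw [Finset.disjoint_left]
    intro i hiC hiA
    simp only [hA, hC, Finset.mem_filter] at hiC hiA
    linarith [hiC.2.2, hiA.2.2]
  have hdCB : Disjoint C B := by
    rw [Finset.disjoint_left]
    intro i hiC hiB
    simp only [hB, hC, Finset.mem_filter] at hiC hiB
    linarith [hiC.2.1, hiB.2.1]
  rw [e1, e2, Finset.card_union_of_disjoint hdCA, Finset.card_union_of_disjoint hdCB] at hcount
  have hABeq : A.card = B.card := by omega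
  rw [hAf, hBf]
  omega
end

section
/- If P is a twist cycle of period n > 2 of the P-linear map f with unique fixed point a, and I = [b_l, b_r] is the P-basic interval containing a, then at least one of b_l, b_r is the image under f of a point of P lying on the same side of a as it. -/
/-- Let `P = {x 0 < ⋯ < x (n-1)}` (with `n > 2`) be a twist cycle of the `P`-linear map
`f` with unique fixed point `a ∉ P`. (The twist property is used through its consequence:
if two points of `P` lie on the same side of `a` and map to the same side of `a`, then
the one farther from `a` has image farther from `a`.) Let `x bl` and `x br` be the points
of `P` immediately to the left and right of `a`. Then at least one of `x bl`, `x br` is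
the image under `f` of a point of `P` lying on the same side of `a` as it. -/
theorem stmt7 (n : ℕ) (hn : 2 < n) (f : ℝ → ℝ) (hf : Continuous f)
    (x : Fin n → ℝ) (hx : StrictMono x) (σ : Equiv.Perm (Fin n))
    (hcyc : IsCyclicPerm σ) (hfx : ∀ i, f (x i) = x (σ i))
    (a : ℝ) (hfix : ∀ y : ℝ, f y = y ↔ y = a) (ha : ∀ i, x i ≠ a)
    (htwist : ∀ i j : Fin n,
      ((x i < a ∧ x j < a) ∨ (a < x i ∧ a < x j)) →
      ((f (x i) < a ∧ f (x j) < a) ∨ (a < f (x i) ∧ a < f (x j))) →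
      |x j - a| < |x i - a| → |f (x j) - a| < |f (x i) - a|)
    (bl br : Fin n)
    (hbl : x bl < a) (hblmax : ∀ i, x i < a → x i ≤ x bl)
    (hbr : a < x br) (hbrmin : ∀ i, a < x i → x br ≤ x i) :
    (∃ i, x i < a ∧ f (x i) = x bl) ∨ (∃ i, a < x i ∧ f (x i) = x br) := by
  by_contra hcon
  push_neg at hcon
  obtain ⟨hL, hR⟩ := hcon
  -- σ has no fixed points
  have hnofix : ∀ i : Fin n, σ i ≠ i := by
    intro i hi
    have horb : ∀ t : ℕ, (σ ^ t) i = i := by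
      intro t
      induction t with
      | zero => rfl
      | succ t ih => rw [pow_succ, Equiv.Perm.mul_apply, hi, ih]
    have hj : ∃ j : Fin n, j ≠ i := by
      rcases Nat.eq_zero_or_pos i.val with h | h
      · exact ⟨⟨1, by omega⟩, by simp [Fin.ext_iff]; omega⟩
      · exact ⟨⟨0, by omega⟩, by simp [Fin.ext_iff]; omega⟩
    obtain ⟨j, hji⟩ := hj
    obtain ⟨t, ht⟩ := hcyc i j
    rw [horb t] at ht
    exact hji ht.symm
  -- points left of a move right, points right of a move left
  have hleft : ∀ y : ℝ, y < a → y < f y := by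
    intro y hy
    by_contra hle
    push_neg at hle
    have hne : f y ≠ y := fun h => absurd ((hfix y).mp h) (ne_of_lt hy)
    have hlt : f y < y := lt_of_le_of_ne hle hne
    set i0 : Fin n := ⟨0, by omega⟩ with hi0
    have hza : x i0 < a :=
      lt_of_le_of_lt (hx.monotone (Fin.le_def.mpr (Nat.zero_le _))) hbl
    have hz : x i0 < f (x i0) := by
      rw [hfx]
      exact lt_of_le_of_ne (hx.monotone (Fin.le_def.mpr (Nat.zero_le _)))
        (fun h => hnofix i0 (hx.injective h.symm))
    have hcont : ContinuousOn (fun w => f w - w) (Set.uIcc y (x i0)) :=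
      (hf.sub continuous_id).continuousOn
    have hmem : (0 : ℝ) ∈ Set.uIcc (f y - y) (f (x i0) - x i0) :=
      Set.mem_uIcc.mpr (Or.inl ⟨by linarith, by linarith⟩)
    obtain ⟨w, hw, hgw⟩ := intermediate_value_uIcc hcont hmem
    have hgw' : f w - w = 0 := hgw
    have hwa : w = a := (hfix w).mp (by linarith : f w = w)
    rcases Set.mem_uIcc.mp hw with ⟨_, h2⟩ | ⟨_, h2⟩ <;> linarith
  have hright : ∀ y : ℝ, a < y → f y < y := by
    intro y hy
    by_contra hle
    push_neg at hle
    have hne : f y ≠ y := fun h => absurd ((hfix y).mp h) (ne_of_gt hy)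
    have hlt : y < f y := lt_of_le_of_ne hle (Ne.symm hne)
    set im : Fin n := ⟨n - 1, by omega⟩ with him
    have hle' : ∀ j : Fin n, j ≤ im := fun j => Fin.le_def.mpr (show j.val ≤ n - 1 by have := j.isLt; omega)
    have hza : a < x im := lt_of_lt_of_le hbr (hx.monotone (hle' br))
    have hz : f (x im) < x im := by
      rw [hfx]
      exact lt_of_le_of_ne (hx.monotone (hle' (σ im)))
        (fun h => hnofix im (hx.injective h))
    have hcont : ContinuousOn (fun w => f w - w) (Set.uIcc y (x im)) :=
      (hf.sub continuous_id).continuousOn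
    have hmem : (0 : ℝ) ∈ Set.uIcc (f y - y) (f (x im) - x im) :=
      Set.mem_uIcc.mpr (Or.inr ⟨by linarith, by linarith⟩)
    obtain ⟨w, hw, hgw⟩ := intermediate_value_uIcc hcont hmem
    have hgw' : f w - w = 0 := hgw
    have hwa : w = a := (hfix w).mp (by linarith : f w = w)
    rcases Set.mem_uIcc.mp hw with ⟨h1, _⟩ | ⟨h1, _⟩ <;> linarith
  -- bl maps to the right of a, br maps to the left of a
  have hσbl : a < x (σ bl) := by
    rcases lt_trichotomy (x (σ bl)) a with h | h | h
    · have h1 := hblmax (σ bl) h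
      have h2 := hleft (x bl) hbl
      rw [hfx] at h2; linarith
    · exact absurd h (ha (σ bl))
    · exact h
  have hσbr : x (σ br) < a := by
    rcases lt_trichotomy (x (σ br)) a with h | h | h
    · exact h
    · exact absurd h (ha (σ br))
    · have h1 := hbrmin (σ br) h
      have h2 := hright (x br) hbr
      rw [hfx] at h2; linarith
  -- the preimage of bl is br
  have hσbrbl : σ br = bl := by
    set p : Fin n := σ.symm bl with hp
    have hfp : f (x p) = x bl := by rw [hfx, hp, Equiv.apply_symm_apply]
    have hpa : a < x p := by
      rcases lt_trichotomy (x p) a with h | h | h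
      · exact absurd hfp (hL p h)
      · exact absurd h (ha p)
      · exact h
    by_contra hne
    have hpbr : p ≠ br := fun h => hne (by rw [← h, hp, Equiv.apply_symm_apply])
    have hlt : x br < x p :=
      lt_of_le_of_ne (hbrmin p hpa) (fun h => hpbr (hx.injective h.symm))
    have h1 : |x br - a| < |x p - a| := by
      rw [abs_of_pos (by linarith), abs_of_pos (by linarith)]; linarith
    have h2 := htwist p br (Or.inr ⟨hpa, hbr⟩)
      (Or.inl ⟨by rw [hfp]; exact hbl, by rw [hfx]; exact hσbr⟩) h1
    rw [hfp, hfx] at h2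
    rw [abs_of_neg (by linarith), abs_of_neg (by linarith)] at h2
    have h3 := hblmax (σ br) hσbr
    linarith
  -- the preimage of br is bl
  have hσblbr : σ bl = br := by
    set q : Fin n := σ.symm br with hq
    have hfq : f (x q) = x br := by rw [hfx, hq, Equiv.apply_symm_apply]
    have hqa : x q < a := by
      rcases lt_trichotomy (x q) a with h | h | h
      · exact h
      · exact absurd h (ha q)
      · exact absurd hfq (hR q h)
    by_contra hne
    have hqbl : q ≠ bl := fun h => hne (by rw [← h, hq, Equiv.apply_symm_apply])
    have hlt : x q < x bl :=
      lt_of_le_of_ne (hblmax q hqa) (fun h => hqbl (hx.injective h))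
    have h1 : |x bl - a| < |x q - a| := by
      rw [abs_of_neg (by linarith), abs_of_neg (by linarith)]; linarith
    have h2 := htwist q bl (Or.inl ⟨hqa, hbl⟩)
      (Or.inr ⟨by rw [hfq]; exact hbr, by rw [hfx]; exact hσbl⟩) h1
    rw [hfq, hfx] at h2
    rw [abs_of_pos (by linarith), abs_of_pos (by linarith)] at h2
    have h3 := hbrmin (σ bl) hσbl
    linarith
  -- so σ swaps bl and br, contradicting cyclicity since n > 2
  have horb : ∀ t : ℕ, (σ ^ t) bl = bl ∨ (σ ^ t) bl = br := by
    intro t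
    induction t with
    | zero => left; rfl
    | succ t ih =>
      rw [pow_succ', Equiv.Perm.mul_apply]
      rcases ih with h | h
      · rw [h, hσblbr]; right; rfl
      · rw [h, hσbrbl]; left; rfl
  have hk : ∃ k : Fin n, k ≠ bl ∧ k ≠ br := by
    by_contra h
    push_neg at h
    have hv : ∀ k : Fin n, k.val = bl.val ∨ k.val = br.val := by
      intro k
      by_cases hkb : k = bl
      · left; rw [hkb]
      · right; rw [h k hkb]
    have h0 := hv ⟨0, by omega⟩
    have h1 := hv ⟨1, by omega⟩
    have h2 := hv ⟨2, by omega⟩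
    simp only at h0 h1 h2
    omega
  obtain ⟨k, hkbl, hkbr⟩ := hk
  obtain ⟨t, ht⟩ := hcyc bl k
  rcases horb t with h | h
  · exact hkbl (by rw [← ht, h])
  · exact hkbr (by rw [← ht, h])
end

section
/- The Štefan permutation of period 2n+1 has no block structure, for every n ≥ 1. -/
/-- A permutation of `Fin N` has block structure if for some block size `q > 1` and
number of blocks `b > 1` with `N = b * q`, it maps the consecutive blocks of size `q`
to one another. -/
def HasBlockStructure {N : ℕ} (σ : Equiv.Perm (Fin N)) : Prop :=
  ∃ q b : ℕ, 1 < q ∧ 1 < b ∧ N = b * q ∧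
    ∀ i i' : Fin N, (i : ℕ) / q = (i' : ℕ) / q → ((σ i : ℕ)) / q = ((σ i' : ℕ)) / q

/-- The Štefan permutation of period `2n+1` (0-based: `σ 0 = n`, `σ j = 2n+1−j` for
`1 ≤ j ≤ n`, `σ j = 2n−j` for `n+1 ≤ j ≤ 2n`) has no block structure, for every
`n ≥ 1`. -/
theorem stmt11 (n : ℕ) (hn : 1 ≤ n) (σ : Equiv.Perm (Fin (2 * n + 1)))
    (hσ : ∀ j : Fin (2 * n + 1), (σ j : ℕ) =
      if (j : ℕ) = 0 then n
      else if (j : ℕ) ≤ n then 2 * n + 1 - (j : ℕ)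
      else 2 * n - (j : ℕ)) :
    ¬ HasBlockStructure σ := by
  rintro ⟨q, b, hq, hb, hN, hblk⟩
  -- b is odd, hence b ≥ 3, hence q ≤ n
  have hb3 : 3 ≤ b := by
    rcases Nat.even_or_odd b with ⟨k, hk⟩ | ⟨k, hk⟩
    · exfalso
      have : 2 * n + 1 = 2 * (k * q) := by rw [hN, hk]; ring
      omega
    · omega
  have hqn : q ≤ n := by
    have : 3 * q ≤ b * q := Nat.mul_le_mul_right q hb3
    omega
  set i0 : Fin (2 * n + 1) := ⟨0, by omega⟩
  set i1 : Fin (2 * n + 1) := ⟨1, by omega⟩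
  have h01 : (i0 : ℕ) / q = (i1 : ℕ) / q := by
    have : (1 : ℕ) / q = 0 := Nat.div_eq_of_lt hq
    simp [i0, i1, this]
  have h := hblk i0 i1 h01
  have hσ0 : (σ i0 : ℕ) = n := by
    rw [hσ i0]; simp [i0]
  have hσ1 : (σ i1 : ℕ) = 2 * n := by
    rw [hσ i1]
    have : (i1 : ℕ) = 1 := rfl
    rw [this]
    simp [hn]
  rw [hσ0, hσ1] at h
  have h1 : 1 ≤ n / q := Nat.one_le_div_iff (by omega) |>.mpr hqn
  have h2 : n / q + n / q ≤ 2 * n / q := by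
    rw [Nat.le_div_iff_mul_le (by omega : 0 < q), add_mul]
    have := Nat.div_mul_le_self n q
    omega
  omega
end

section
/- The Štefan permutation σ of {1,…,2n+1} is a cyclic permutation (a single (2n+1)-cycle). -/
/-- The Štefan permutation `σ` of `{1,…,2n+1}` (0-based: `σ 0 = n`, `σ j = 2n+1−j` for
`1 ≤ j ≤ n`, `σ j = 2n−j` for `n+1 ≤ j ≤ 2n`), for `n ≥ 1`, is a cyclic permutation
(a single `(2n+1)`-cycle). -/
theorem stmt12 (n : ℕ) (hn : 1 ≤ n) (σ : Equiv.Perm (Fin (2 * n + 1)))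
    (hσ : ∀ j : Fin (2 * n + 1), (σ j : ℕ) =
      if (j : ℕ) = 0 then n
      else if (j : ℕ) ≤ n then 2 * n + 1 - (j : ℕ)
      else 2 * n - (j : ℕ)) :
    IsCyclicPerm σ := by
  have hstep : ∀ (x : Fin (2*n+1)) (t : ℕ), (σ ^ (t+1)) x = σ ((σ ^ t) x) := by
    intro x t
    rw [pow_succ', Equiv.Perm.mul_apply]
  set z : Fin (2*n+1) := ⟨0, by omega⟩ with hz
  have hσz : ((σ z : Fin (2*n+1)) : ℕ) = n := by
    rw [hσ z]; simp [hz]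
  have key : ∀ k, k < n → ((σ ^ (2*k+1)) z : ℕ) = n - k ∧ ((σ ^ (2*k+2)) z : ℕ) = n + 1 + k := by
    intro k hk
    induction k with
    | zero =>
      have h1 : ((σ ^ 1) z : ℕ) = n := by rw [pow_one]; exact hσz
      constructor
      · simpa using h1
      · have : (σ ^ 2) z = σ ((σ ^ 1) z) := hstep z 1
        rw [show 2*0+2 = 2 by ring, this, hσ]
        rw [h1]
        simp only [if_neg (by omega : ¬ n = 0), if_pos (le_refl n)]
        omega
    | succ k ih =>
      have hk' : k < n := by omega
      obtain ⟨ih1, ih2⟩ := ih hk'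
      have h3 : ((σ ^ (2*k+3)) z : ℕ) = n - (k+1) := by
        have : (σ ^ (2*k+3)) z = σ ((σ ^ (2*k+2)) z) := hstep z (2*k+2)
        rw [this, hσ, ih2]
        simp only [if_neg (by omega : ¬ n+1+k = 0), if_neg (by omega : ¬ n+1+k ≤ n)]
        omega
      constructor
      · have : 2*(k+1)+1 = 2*k+3 := by ring
        rw [this]; exact h3
      · have heq : (σ ^ (2*(k+1)+2)) z = σ ((σ ^ (2*k+3)) z) := by
          have := hstep z (2*k+3)
          rwa [show 2*k+3+1 = 2*(k+1)+2 by ring] at this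
        rw [heq, hσ, h3]
        simp only [if_neg (by omega : ¬ n - (k+1) = 0), if_pos (by omega : n - (k+1) ≤ n)]
        omega
  have reach0 : ∀ j : Fin (2*n+1), ∃ t ≤ 2*n, (σ ^ t) z = j := by
    intro j
    have hj : (j : ℕ) < 2*n+1 := j.isLt
    rcases Nat.eq_zero_or_pos (j : ℕ) with h0 | hpos
    · exact ⟨0, by omega, by ext; simp [hz]; omega⟩
    rcases le_or_gt (j : ℕ) n with hle | hgt
    · refine ⟨2*(n - j)+1, by omega, ?_⟩
      have := (key (n - (j:ℕ)) (by omega)).1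
      ext; rw [this]; omega
    · refine ⟨2*((j:ℕ) - n - 1)+2, by omega, ?_⟩
      have := (key ((j:ℕ) - n - 1) (by omega)).2
      ext; rw [this]; omega
  have period : (σ ^ (2*n+1)) z = z := by
    have h2n : ((σ ^ (2*n)) z : ℕ) = 2*n := by
      have := (key (n-1) (by omega)).2
      rw [show 2*(n-1)+2 = 2*n by omega] at this
      rw [this]; omega
    have : (σ ^ (2*n+1)) z = σ ((σ ^ (2*n)) z) := hstep z (2*n)
    rw [this]
    ext
    rw [hσ, h2n]
    simp only [if_neg (by omega : ¬ 2*n = 0), if_neg (by omega : ¬ 2*n ≤ n)]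
    simp [hz]
  intro i j
  obtain ⟨t1, ht1, hi⟩ := reach0 i
  obtain ⟨s, _, hj⟩ := reach0 j
  have hto0 : (σ ^ (2*n+1-t1)) i = z := by
    rw [← hi, ← Equiv.Perm.mul_apply, ← pow_add]
    rw [show 2*n+1-t1+t1 = 2*n+1 by omega]
    exact period
  refine ⟨s + (2*n+1-t1), ?_⟩
  rw [pow_add, Equiv.Perm.mul_apply, hto0, hj]
end

section
/- The Štefan permutation of period 2n+1 is convergent, and its over-rotation pair is (n, 2n+1). -/
/-!
For the Štefan permutation every point `j ≤ n` moves right and every point `j > n` moves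
left, so it is convergent with threshold `n + 1`. For a convergent permutation the sign of
the displacement only records on which side of the threshold a point lies, so a sign change
at `i` means that `σ` carries `i` across the threshold. The Štefan permutation carries every
point across except `0 ↦ n`, giving `2n` sign changes.
-/

open Finset

lemma orc_eq_card_crossing {N : ℕ} (σ : Equiv.Perm (Fin N)) (m : ℕ)
    (h : ∀ i : Fin N, ((i : ℕ) < m → (i : ℕ) < σ i) ∧ (m ≤ (i : ℕ) → (σ i : ℕ) < i)) :
    orc σ = #{i : Fin N | ((i : ℕ) < m ↔ m ≤ (σ i : ℕ))} := by
  have pos_iff : ∀ i : Fin N, (0 : ℤ) < (σ i : ℕ) - (i : ℕ) ↔ (i : ℕ) < m := fun i => by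
    have := h i; omega
  have neg_iff : ∀ i : Fin N, ((σ i : ℕ) : ℤ) - (i : ℕ) < 0 ↔ m ≤ (i : ℕ) := fun i => by
    have := h i; omega
  unfold orc
  congr 1
  refine filter_congr fun i _ => ?_
  rw [mul_neg_iff, pos_iff, neg_iff, pos_iff, neg_iff]
  omega

/-- The Štefan permutation of `{0, …, 2n}`, i.e. of `{1, …, 2n+1}` shifted down by one. -/
def stefan (n j : ℕ) : ℕ :=
  if j = 0 then n else if j ≤ n then 2 * n + 1 - j else 2 * n - j

section Stefan

variable {n j : ℕ}

lemma stefan_moves_toward_threshold (hn : 1 ≤ n) (hj : j < 2 * n + 1) :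
    (j < n + 1 → j < stefan n j) ∧ (n + 1 ≤ j → stefan n j < j) := by
  unfold stefan
  split_ifs <;> omega

lemma stefan_crosses_threshold_iff (hj : j < 2 * n + 1) :
    (j < n + 1 ↔ n + 1 ≤ stefan n j) ↔ j ≠ 0 := by
  unfold stefan
  split_ifs <;> omega

end Stefan

/-- The Štefan permutation of period `2n+1` is convergent, and its over-rotation pair is
`(n, 2n+1)` (i.e. the sign-change count `orc σ` equals `2n`). -/
theorem stmt13 (n : ℕ) (hn : 1 ≤ n) (σ : Equiv.Perm (Fin (2 * n + 1)))
    (hσ : ∀ j : Fin (2 * n + 1), (σ j : ℕ) =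
      if (j : ℕ) = 0 then n
      else if (j : ℕ) ≤ n then 2 * n + 1 - (j : ℕ)
      else 2 * n - (j : ℕ)) :
    Convergent σ ∧ orc σ = 2 * n := by
  have threshold : ∀ i : Fin (2 * n + 1),
      ((i : ℕ) < n + 1 → (i : ℕ) < σ i) ∧ (n + 1 ≤ (i : ℕ) → (σ i : ℕ) < i) := fun i => by
    rw [hσ i]
    exact stefan_moves_toward_threshold hn i.2
  refine ⟨⟨n + 1, by omega, threshold⟩, ?_⟩
  rw [orc_eq_card_crossing σ (n + 1) threshold]
  have crossing : ∀ i : Fin (2 * n + 1), ((i : ℕ) < n + 1 ↔ n + 1 ≤ (σ i : ℕ)) ↔ i ≠ 0 :=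
    fun i => by
      rw [hσ i, Fin.ne_iff_vne]
      exact stefan_crosses_threshold_iff i.2
  simp only [crossing, filter_ne', card_erase_of_mem (mem_univ _), card_univ, Fintype.card_fin,
    Nat.add_sub_cancel]
end

section
/- Define the order ≫ on integers greater than 2 by: 4 ≫ 6 ≫ 3 ≫ 8 ≫ 10 ≫ 5 ≫ ⋯ ≫ 4n ≫ 4n+2 ≫ 2n+1 ≫ 4n+4 ≫ ⋯ . Then for all m, s > 2, m ≫ s holds if and only if η(m) ⋗ η(s) in the over-rotation pair order, where (p,q) ⋗ (r,s) means p/q < r/s, or p/q = r/s = a/b in lowest terms with p/a preceding r/b in the Sharkovsky order. -/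
/-- The (strict) Sharkovsky order: `sharkLt a b` means `a` strictly precedes `b` in
`3 ⊳ 5 ⊳ 7 ⊳ ⋯ ⊳ 2·3 ⊳ 2·5 ⊳ ⋯ ⊳ 2²·3 ⊳ ⋯ ⊳ 2² ⊳ 2 ⊳ 1`. Writing `a = 2^{ka}·oa`
and `b = 2^{kb}·ob` with `oa, ob` odd. -/
def sharkLt (a b : ℕ) : Prop :=
  if a / 2 ^ (a.factorization 2) = 1 then b / 2 ^ (b.factorization 2) = 1 ∧ b < a
  else b / 2 ^ (b.factorization 2) = 1 ∨ a.factorization 2 < b.factorization 2 ∨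
    (a.factorization 2 = b.factorization 2 ∧
      a / 2 ^ (a.factorization 2) < b / 2 ^ (b.factorization 2))

/-- The order `⋗` on over-rotation pairs: `(p,q) ⋗ (r,s)` iff `p/q < r/s`, or
`p/q = r/s = a/b` in lowest terms and the multiplier `p/a = gcd(p,q)` strictly precedes
`r/b = gcd(r,s)` in the Sharkovsky order. -/
def gtrdot (p r : ℕ × ℕ) : Prop :=
  (p.1 : ℚ) / p.2 < (r.1 : ℚ) / r.2 ∨
  ((p.1 : ℚ) / p.2 = (r.1 : ℚ) / r.2 ∧ sharkLt (Nat.gcd p.1 p.2) (Nat.gcd r.1 r.2))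

/-- `η(2s) = (s−1, 2s)` and `η(2n+1) = (n, 2n+1)`. -/
def etaPair (m : ℕ) : ℕ × ℕ :=
  if m % 2 = 0 then (m / 2 - 1, m) else (m / 2, m)

/-- Position of `m > 2` in the order `4 ≫ 6 ≫ 3 ≫ 8 ≫ 10 ≫ 5 ≫ ⋯`:
`wpos (4n) = 3n−2`, `wpos (4n+2) = 3n−1`, `wpos (2n+1) = 3n`; the order `≫` is
`m ≫ s ↔ wpos m < wpos s`. -/
def wpos (m : ℕ) : ℕ :=
  if m % 4 = 0 then 3 * (m / 4) - 2
  else if m % 2 = 0 then 3 * (m / 4) - 1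
  else 3 * (m / 2)

lemma fact2 : (2:ℕ).factorization 2 = 1 := by
  simp [Nat.Prime.factorization_self Nat.prime_two]

lemma shark21 : sharkLt 2 1 := by unfold sharkLt; rw [fact2]; norm_num
lemma not_shark11 : ¬ sharkLt 1 1 := by unfold sharkLt; norm_num
lemma not_shark12 : ¬ sharkLt 1 2 := by unfold sharkLt; rw [fact2]; norm_num
lemma not_shark22 : ¬ sharkLt 2 2 := by unfold sharkLt; rw [fact2]; norm_num

lemma g3 (a : ℕ) : Nat.gcd a (2*a+1) = 1 := by
  have h := Nat.dvd_sub (Nat.gcd_dvd_right a (2*a+1)) ((Nat.gcd_dvd_left a (2*a+1)).mul_left 2)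
  rw [show 2*a+1 - 2*a = 1 from by omega] at h
  exact Nat.eq_one_of_dvd_one h

lemma gA (a : ℕ) : Nat.gcd (2*a+1) (4*a+4) = 1 := by
  have h2 : Nat.gcd (2*a+1) (4*a+4) ∣ 2 := by
    have h := Nat.dvd_sub (Nat.gcd_dvd_right (2*a+1) (4*a+4))
      ((Nat.gcd_dvd_left (2*a+1) (4*a+4)).mul_left 2)
    rwa [show 4*a+4 - 2*(2*a+1) = 2 from by omega] at h
  rcases (Nat.prime_two.eq_one_or_self_of_dvd _ h2) with h | h
  · exact h
  · exfalso
    obtain ⟨k, hk⟩ := h ▸ Nat.gcd_dvd_left (2*a+1) (4*a+4)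
    omega

lemma gB (a : ℕ) : Nat.gcd (2*a+2) (4*a+6) = 2 := by
  rw [show 2*a+2 = 2*(a+1) from by ring, show 4*a+6 = 2*(2*(a+1)+1) from by ring,
    Nat.gcd_mul_left, g3]

lemma gC (a : ℕ) : Nat.gcd (a+1) (2*a+3) = 1 := by
  rw [show 2*a+3 = 2*(a+1)+1 from by ring]; exact g3 (a+1)

lemma etaA (a : ℕ) : etaPair (4*a+4) = (2*a+1, 4*a+4) := by
  unfold etaPair
  rw [if_pos (by omega : (4*a+4) % 2 = 0), show (4*a+4)/2 - 1 = 2*a+1 from by omega]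

lemma etaB (a : ℕ) : etaPair (4*a+6) = (2*a+2, 4*a+6) := by
  unfold etaPair
  rw [if_pos (by omega : (4*a+6) % 2 = 0), show (4*a+6)/2 - 1 = 2*a+2 from by omega]

lemma etaC (a : ℕ) : etaPair (2*a+3) = (a+1, 2*a+3) := by
  unfold etaPair
  rw [if_neg (by omega : ¬ (2*a+3) % 2 = 0), show (2*a+3)/2 = a+1 from by omega]

lemma wA (a : ℕ) : wpos (4*a+4) = 3*a+1 := by
  unfold wpos; rw [if_pos (by omega : (4*a+4) % 4 = 0)]; omega

lemma wB (a : ℕ) : wpos (4*a+6) = 3*a+2 := by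
  unfold wpos
  rw [if_neg (by omega : ¬ (4*a+6) % 4 = 0), if_pos (by omega : (4*a+6) % 2 = 0)]; omega

lemma wC (a : ℕ) : wpos (2*a+3) = 3*a+3 := by
  unfold wpos
  rw [if_neg (by omega : ¬ (2*a+3) % 4 = 0), if_neg (by omega : ¬ (2*a+3) % 2 = 0)]; omega

lemma decomp (m : ℕ) (hm : 2 < m) :
    (∃ a, m = 4*a+4) ∨ (∃ a, m = 4*a+6) ∨ (∃ a, m = 2*a+3) := by
  rcases (by omega : m % 4 = 0 ∨ m % 4 = 2 ∨ m % 2 = 1) with h | h | h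
  · exact Or.inl ⟨m/4-1, by omega⟩
  · exact Or.inr (Or.inl ⟨m/4-1, by omega⟩)
  · exact Or.inr (Or.inr ⟨m/2-1, by omega⟩)

lemma gtrdot_mk (x y u v : ℕ) (hy : 0 < y) (hv : 0 < v) :
    gtrdot (x, y) (u, v) ↔
      (x*v < u*y ∨ (x*v = u*y ∧ sharkLt (Nat.gcd x y) (Nat.gcd u v))) := by
  unfold gtrdot
  rw [div_lt_div_iff₀ (by exact_mod_cast hy) (by exact_mod_cast hv),
    div_eq_div_iff (by exact_mod_cast hy.ne' : (y:ℚ) ≠ 0) (by exact_mod_cast hv.ne' : (v:ℚ) ≠ 0),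
    ← Nat.cast_mul, ← Nat.cast_mul, Nat.cast_lt, Nat.cast_inj]

/-- For all `m, s > 2`, `m ≫ s` (in the order `4 ≫ 6 ≫ 3 ≫ 8 ≫ 10 ≫ 5 ≫ ⋯`, given by
positions `wpos`) holds if and only if `η(m) ⋗ η(s)` in the over-rotation pair order. -/
theorem stmt15 (m s : ℕ) (hm : 2 < m) (hs : 2 < s) :
    wpos m < wpos s ↔ gtrdot (etaPair m) (etaPair s) := by
  obtain ⟨a, rfl⟩ | ⟨a, rfl⟩ | ⟨a, rfl⟩ := decomp m hm <;>
    obtain ⟨b, rfl⟩ | ⟨b, rfl⟩ | ⟨b, rfl⟩ := decomp s hs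
  -- case AA
  · rw [wA, wA, etaA, etaA, gtrdot_mk _ _ _ _ (by omega) (by omega), gA, gA]
    simp only [not_shark11, and_false, or_false]
    constructor <;> intro h <;> nlinarith
  -- case AB
  · rw [wA, wB, etaA, etaB, gtrdot_mk _ _ _ _ (by omega) (by omega), gA, gB]
    simp only [not_shark12, and_false, or_false]
    constructor <;> intro h <;> nlinarith
  -- case AC
  · rw [wA, wC, etaA, etaC, gtrdot_mk _ _ _ _ (by omega) (by omega), gA, gC]
    simp only [not_shark11, and_false, or_false]
    constructor <;> intro h <;> nlinarith
  -- case BA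
  · rw [wB, wA, etaB, etaA, gtrdot_mk _ _ _ _ (by omega) (by omega), gB, gA]
    simp only [shark21, and_true]
    constructor
    · intro h; left; nlinarith
    · rintro (h | h)
      · nlinarith
      · exfalso
        rw [show (2*a+2)*(4*b+4) = 8*(a*b)+8*a+8*b+8 from by ring,
          show (2*b+1)*(4*a+6) = 8*(a*b)+4*a+12*b+6 from by ring] at h
        obtain ⟨c, hc⟩ : ∃ c, a*b = c := ⟨_, rfl⟩
        rw [hc] at h
        omega
  -- case BB
  · rw [wB, wB, etaB, etaB, gtrdot_mk _ _ _ _ (by omega) (by omega), gB, gB]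
    simp only [not_shark22, and_false, or_false]
    constructor <;> intro h <;> nlinarith
  -- case BC
  · rw [wB, wC, etaB, etaC, gtrdot_mk _ _ _ _ (by omega) (by omega), gB, gC]
    simp only [shark21, and_true]
    constructor
    · intro h
      rcases Nat.lt_or_ge a b with h' | h'
      · left; nlinarith
      · have hab : a = b := by omega
        subst hab; right; ring
    · rintro (h | h)
      · nlinarith
      · rw [show (2*a+2)*(2*b+3) = 4*(a*b)+6*a+4*b+6 from by ring,
          show (b+1)*(4*a+6) = 4*(a*b)+4*a+6*b+6 from by ring] at h
        obtain ⟨c, hc⟩ : ∃ c, a*b = c := ⟨_, rfl⟩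
        rw [hc] at h
        omega
  -- case CA
  · rw [wC, wA, etaC, etaA, gtrdot_mk _ _ _ _ (by omega) (by omega), gC, gA]
    simp only [not_shark11, and_false, or_false]
    constructor <;> intro h <;> nlinarith
  -- case CB
  · rw [wC, wB, etaC, etaB, gtrdot_mk _ _ _ _ (by omega) (by omega), gC, gB]
    simp only [not_shark12, and_false, or_false]
    constructor <;> intro h <;> nlinarith
  -- case CC
  · rw [wC, wC, etaC, etaC, gtrdot_mk _ _ _ _ (by omega) (by omega), gC, gC]
    simp only [not_shark11, and_false, or_false]
    constructor <;> intro h <;> nlinarith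
end

section
/- A cycle Q of period m+2 containing two points x₂ < x₃ in adjacent positions around a repelling fixed point with the dynamics x < f³(x) < f(x) < a < f²(x) cannot be a doubling; more precisely: if Q = {y_1 < … < y_{m+2}} is a cycle of period m+2 of an interval map f, and there exists x ∈ Q with x < f³(x) < f(x) < a < f²(x) where a is a fixed point of f, such that f(x) and f³(x) are the two points of Q immediately left of a and f²(x) is among the two points of Q immediately right of a with the other point of Q in that position being to the right of f²(x), then Q is not a doubling. -/
/-- Let `Q = {y 0 < ⋯ < y (2K-1)}` be a cycle (of period `2K = m+2`) of an interval map
`f`, listed by the strictly monotone `y` with combinatorics given by the cyclic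
permutation `σ` (so `f (y i) = y (σ i)`). Suppose there is a point `x = y i0` of `Q` and
a fixed point `a` of `f` with `x < f³(x) < f(x) < a < f²(x)`, such that `f(x)` and
`f³(x)` are the two points of `Q` immediately to the left of `a`, and `f²(x)` is the
point of `Q` immediately to the right of `a` (all other points of `Q` right of `a` lie
to the right of `f²(x)`). Then `Q` is not a doubling, i.e. `f` does not map the
consecutive pairs `{y (2j), y (2j+1)}` to one another. -/
theorem stmt17 (K : ℕ) (hK : 1 < K) (f : ℝ → ℝ)
    (y : Fin (2 * K) → ℝ) (hy : StrictMono y)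
    (σ : Equiv.Perm (Fin (2 * K))) (hcyc : IsCyclicPerm σ)
    (hfy : ∀ i, f (y i) = y (σ i))
    (a : ℝ) (hfa : f a = a)
    (i0 : Fin (2 * K))
    (h1 : y i0 < f^[3] (y i0)) (h2 : f^[3] (y i0) < f (y i0))
    (h3 : f (y i0) < a) (h4 : a < f^[2] (y i0))
    (hl1 : ∀ j, y j < a → y j ≤ f (y i0))
    (hl2 : ∀ j, y j < a → y j ≠ f (y i0) → y j ≤ f^[3] (y i0))
    (hr : ∀ j, a < y j → f^[2] (y i0) ≤ y j) :
    ¬ (∀ i i' : Fin (2 * K), (i : ℕ) / 2 = (i' : ℕ) / 2 →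
        ((σ i : ℕ)) / 2 = ((σ i' : ℕ)) / 2) := by
  intro D
  set p := σ i0 with hpdef
  set q := σ p with hqdef
  set r := σ q with hrdef
  have e1 : f (y i0) = y p := hfy i0
  have e2 : f^[2] (y i0) = y q := by
    rw [Function.iterate_succ_apply', Function.iterate_one, e1, hqdef]
    exact hfy p
  have e3 : f^[3] (y i0) = y r := by
    rw [Function.iterate_succ_apply', e2, hrdef]
    exact hfy q
  simp only [e1, e2, e3] at h1 h2 h3 h4 hl1 hl2 hr
  -- basic: fixed iterates of σ
  have hfix : ∀ (j : Fin (2 * K)), σ j = j → ∀ s : ℕ, (σ ^ s) j = j := by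
    intro j hj s
    induction s with
    | zero => rfl
    | succ s ih => rw [pow_succ, Equiv.Perm.mul_apply, hj, ih]
  -- index inequalities
  have hrp : (r : ℕ) < (p : ℕ) := hy.lt_iff_lt.mp h2
  have hpq : (p : ℕ) < (q : ℕ) := hy.lt_iff_lt.mp (h3.trans h4)
  have hi0r : (i0 : ℕ) < (r : ℕ) := hy.lt_iff_lt.mp h1
  -- p = r + 1
  have hp_eq : (p : ℕ) = (r : ℕ) + 1 := by
    by_contra hne
    have hlt : (r : ℕ) + 1 < (p : ℕ) := by omega
    set j : Fin (2 * K) := ⟨(r : ℕ) + 1, hlt.trans p.isLt⟩ with hjdef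
    have hrj : y r < y j := hy (by simp [hjdef, Fin.lt_def])
    have hjp : y j < y p := hy (by simp [hjdef, Fin.lt_def]; omega)
    have hja : y j < a := hjp.trans h3
    have := hl2 j hja (ne_of_lt hjp)
    exact absurd this (not_le.mpr hrj)
  -- q = p + 1
  have hq_eq : (q : ℕ) = (p : ℕ) + 1 := by
    by_contra hne
    have hlt : (p : ℕ) + 1 < (q : ℕ) := by omega
    set j : Fin (2 * K) := ⟨(p : ℕ) + 1, hlt.trans q.isLt⟩ with hjdef
    have hpj : y p < y j := hy (by simp [hjdef, Fin.lt_def])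
    have hjq : y j < y q := hy (by simp [hjdef, Fin.lt_def]; omega)
    rcases lt_trichotomy (y j) a with hja | hja | hja
    · exact absurd (hl1 j hja) (not_le.mpr hpj)
    · have hσj : σ j = j := hy.injective (by rw [← hfy j, hja, hfa])
      obtain ⟨s, hs⟩ := hcyc j p
      rw [hfix j hσj s] at hs
      rw [hs] at hpj
      exact lt_irrefl _ hpj
    · exact absurd (hr j hja) (not_le.mpr hjq)
  -- abbreviation
  have hqval : (q : ℕ) = (r : ℕ) + 2 := by omega
  have hqlt : (r : ℕ) + 2 < 2 * K := hqval ▸ q.isLt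
  have hσp : (σ p : ℕ) = (q : ℕ) := by rw [← hqdef]
  have hσq : (σ q : ℕ) = (r : ℕ) := by rw [← hrdef]
  rcases Nat.even_or_odd (r : ℕ) with ⟨t, ht⟩ | ⟨t, ht⟩
  · -- even case: {r, r+1, r+2, r+3} is invariant, contradicting cyclicity
    have hd3 : (r : ℕ) + 3 < 2 * K := by omega
    set d : Fin (2 * K) := ⟨(r : ℕ) + 3, hd3⟩ with hddef
    have key : ∀ j : Fin (2 * K), (r : ℕ) ≤ (j : ℕ) → (j : ℕ) ≤ (r : ℕ) + 3 →
        (r : ℕ) ≤ (σ j : ℕ) ∧ (σ j : ℕ) ≤ (r : ℕ) + 3 := by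
      intro j hj1 hj2
      have hcases : (j : ℕ) = (r : ℕ) ∨ (j : ℕ) = (r : ℕ) + 1 ∨
          (j : ℕ) = (r : ℕ) + 2 ∨ (j : ℕ) = (r : ℕ) + 3 := by omega
      rcases hcases with hc | hc | hc | hc
      · have hjr : j = r := Fin.ext hc
        have := D j p (by rw [hc, hp_eq]; omega)
        rw [hσp, hqval] at this
        omega
      · have hjp : j = p := Fin.ext (by omega)
        rw [hjp, hσp]
        omega
      · have hjq : j = q := Fin.ext (by omega)
        rw [hjq, hσq]
        omega
      · have hjd : j = d := Fin.ext (by rw [hc, hddef])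
        have := D j q (by rw [hc, hqval]; omega)
        rw [hσq] at this
        omega
    have orb : ∀ s : ℕ, (r : ℕ) ≤ ((σ ^ s) p : ℕ) ∧ ((σ ^ s) p : ℕ) ≤ (r : ℕ) + 3 := by
      intro s
      induction s with
      | zero => simp [pow_zero]; omega
      | succ s ih =>
        rw [pow_succ', Equiv.Perm.mul_apply]
        exact key _ ih.1 ih.2
    obtain ⟨s, hs⟩ := hcyc p i0
    have := orb s
    rw [hs] at this
    omega
  · -- odd case: p and q are in the same pair; doubling gives (q)/2 = (r)/2, absurd
    have := D p q (by omega)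
    rw [hσp, hσq, hqval] at this
    omega
end

section
/- For n ≥ 1 the doubling of the Štefan pattern of period 2n+1 is a permutation of {1,…,4n+2} that has block structure (with 2n+1 blocks of size 2) and whose over-rotation pair is (2n, 4n+2); in particular its over-rotation number is n/(2n+1) < 1/2, so it has no division. -/
/-- For `n ≥ 1`, any doubling `π` of the Štefan pattern `σ` of period `2n+1` (i.e. `π` is
a single `(4n+2)`-cycle mapping the consecutive pairs `{2j, 2j+1}` to one another
according to `σ`) is a permutation of `{1,…,4n+2}` that has block structure (with `2n+1`
blocks of size `2`), whose over-rotation pair is `(2n, 4n+2)`; in particular its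
over-rotation number is `n/(2n+1) < 1/2`, so it has no division. -/
theorem stmt19 (n : ℕ) (hn : 1 ≤ n)
    (σ : Equiv.Perm (Fin (2 * n + 1)))
    (hσ : ∀ j : Fin (2 * n + 1), (σ j : ℕ) =
      if (j : ℕ) = 0 then n
      else if (j : ℕ) ≤ n then 2 * n + 1 - (j : ℕ)
      else 2 * n - (j : ℕ))
    (π : Equiv.Perm (Fin (2 * (2 * n + 1))))
    (hπcyc : IsCyclicPerm π)
    (hπ : ∀ i : Fin (2 * (2 * n + 1)), ((π i : ℕ)) / 2 =
      (σ ⟨(i : ℕ) / 2, Nat.div_lt_of_lt_mul (by have := i.isLt; omega)⟩ : ℕ)) :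
    HasBlockStructure π ∧
    orc π = 2 * (2 * n) ∧
    ((2 * n : ℚ)) / (2 * (2 * n + 1)) = (n : ℚ) / (2 * n + 1) ∧
    (n : ℚ) / (2 * n + 1) < 1 / 2 ∧
    ¬ HasDivision π := by
  have hN : 2 * (2 * n + 1) = 4 * n + 2 := by ring
  -- Block structure
  have hblock : HasBlockStructure π := by
    refine ⟨2, 2 * n + 1, by norm_num, by omega, by ring, ?_⟩
    intro i i' h
    have : (⟨(i : ℕ) / 2, Nat.div_lt_of_lt_mul (by have := i.isLt; omega)⟩ :
        Fin (2 * n + 1)) = ⟨(i' : ℕ) / 2, Nat.div_lt_of_lt_mul (by have := i'.isLt; omega)⟩ :=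
      Fin.ext h
    rw [hπ i, hπ i', this]
  refine ⟨hblock, ?_, ?_, ?_, ?_⟩
  · -- orc computation
    have key : ∀ i : Fin (2 * (2 * n + 1)),
        ((((π i : ℕ) : ℤ) - ((i : ℕ) : ℤ)) *
          (((π (π i) : ℕ) : ℤ) - ((π i : ℕ) : ℤ)) < 0 ↔ 2 ≤ (i : ℕ)) := by
      intro i
      have hi := i.isLt
      have hpi := (π i).isLt
      have hqi := (π (π i)).isLt
      have hp := hπ i
      have hq := hπ (π i)
      rw [hσ] at hp hq
      simp only [Fin.val_mk] at hp hq
      rw [mul_neg_iff]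
      split_ifs at hp hq <;> omega
    have hfil : (Finset.univ.filter fun i : Fin (2 * (2 * n + 1)) =>
        (((π i : ℕ) : ℤ) - ((i : ℕ) : ℤ)) *
          (((π (π i) : ℕ) : ℤ) - ((π i : ℕ) : ℤ)) < 0) =
        Finset.univ.filter fun i : Fin (2 * (2 * n + 1)) => 2 ≤ (i : ℕ) :=
      Finset.filter_congr fun i _ => by simpa using key i
    have h2 : (2 : ℕ) < 2 * (2 * n + 1) := by omega
    have hIci : (Finset.univ.filter fun i : Fin (2 * (2 * n + 1)) => 2 ≤ (i : ℕ)) =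
        Finset.Ici (⟨2, h2⟩ : Fin (2 * (2 * n + 1))) := by
      ext i
      simp [Fin.le_def]
    rw [orc, hfil, hIci, Fin.card_Ici]
    simp only [Fin.val_mk]
    omega
  · have h1 : ((2 : ℚ) * (2 * n + 1)) ≠ 0 := by positivity
    have h2 : ((2 * n + 1 : ℕ) : ℚ) ≠ 0 := by positivity
    field_simp
  · rw [div_lt_div_iff₀ (by positivity) (by norm_num)]
    push_cast
    nlinarith [hn]
  · rintro ⟨m, hm0, hm, hdiv⟩
    have hm' : m = 2 * n + 1 := by omega
    subst hm'
    have h0 : (0 : ℕ) < 2 * (2 * n + 1) := by omega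
    have h1 : (1 : ℕ) < 2 * (2 * n + 1) := by omega
    have hp0 := hπ (⟨0, h0⟩ : Fin (2 * (2 * n + 1)))
    have hp1 := hπ (⟨1, h1⟩ : Fin (2 * (2 * n + 1)))
    rw [hσ] at hp0 hp1
    simp only [Fin.val_mk] at hp0 hp1
    rw [show (0:ℕ)/2 = 0 from rfl] at hp0
    rw [show (1:ℕ)/2 = 0 from rfl] at hp1
    simp only [if_true] at hp0 hp1
    have hne : π (⟨0, h0⟩ : Fin (2 * (2 * n + 1))) ≠ π ⟨1, h1⟩ := by
      intro h
      have := π.injective h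
      simp [Fin.ext_iff] at this
    have hne' : (π (⟨0, h0⟩ : Fin (2 * (2 * n + 1))) : ℕ) ≠ (π ⟨1, h1⟩ : ℕ) :=
      fun h => hne (Fin.ext h)
    have hd0 := hdiv ⟨0, h0⟩ (by simp only [Fin.val_mk]; omega)
    have hd1 := hdiv ⟨1, h1⟩ (by simp only [Fin.val_mk]; omega)
    have hpi0 := (π (⟨0, h0⟩ : Fin (2 * (2 * n + 1)))).isLt
    have hpi1 := (π (⟨1, h1⟩ : Fin (2 * (2 * n + 1)))).isLt
    omega
end
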